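/- arXiv:1711.09881 — 5 statements merged into one kernel-verified Lean document; each statement's English description precedes it below -/
import Mathlib

section
/- Let n, k ≥ 1, let P₁, …, P_k ⊆ ℝⁿ be compact convex sets with nonempty interior and let V₁, …, V_k ∈ ℝⁿ. Suppose f₁, …, f_k : ℝⁿ → ℝ are smooth convex functions such that the closure of the gradient image ∇f_i(ℝⁿ) equals P_i for each i, and such that for every x ∈ ℝⁿ and every i, (e^{⟨V_i, ∇f_i(x)⟩} / Vol_{V_i}(P_i)) · det(D²f_i(x)) = exp(−Σ_{j=1}^k f_j(x)), where D²f_i(x) denotes the Hessian matrix of f_i at x. Then Σ_{i=1}^k A_{P_i}(V_i) = 0. -/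
open scoped RealInnerProductSpace
open MeasureTheory Set Metric

/-- The `V`-weighted volume `Vol_V(P) = ∫_P e^{⟨V,p⟩} dp`. -/
noncomputable def weightedVol {n : ℕ} (P : Set (EuclideanSpace ℝ (Fin n)))
    (V : EuclideanSpace ℝ (Fin n)) : ℝ :=
  ∫ p in P, Real.exp ⟪V, p⟫

/-- The weighted barycenter `A_P(V) = Vol_V(P)⁻¹ ∫_P p e^{⟨V,p⟩} dp`. -/
noncomputable def weightedBary {n : ℕ} (P : Set (EuclideanSpace ℝ (Fin n)))
    (V : EuclideanSpace ℝ (Fin n)) : EuclideanSpace ℝ (Fin n) :=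
  (weightedVol P V)⁻¹ • ∫ p in P, Real.exp ⟪V, p⟫ • p

/-- The Hessian determinant `det (D²f(x))`. -/
noncomputable def hessDet {n : ℕ} (f : EuclideanSpace ℝ (Fin n) → ℝ)
    (x : EuclideanSpace ℝ (Fin n)) : ℝ :=
  LinearMap.det (fderiv ℝ (gradient f) x).toLinearMap

section Aux

variable {E : Type*} [NormedAddCommGroup E] [InnerProductSpace ℝ E] [CompleteSpace E]

lemma obs_inner_gradient (f : E → ℝ) (x v : E) :
    ⟪gradient f x, v⟫ = fderiv ℝ f x v :=
  InnerProductSpace.toDual_symm_apply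

lemma obs_gradient_contDiff {f : E → ℝ} (hf : ContDiff ℝ (⊤ : ℕ∞) f) :
    ContDiff ℝ (⊤ : ℕ∞) (gradient f) :=
  (InnerProductSpace.toDual ℝ E).symm.contDiff.comp (hf.fderiv_right (by simp))

lemma obs_grad_mono {f : E → ℝ} (hf : ContDiff ℝ (⊤ : ℕ∞) f) (hc : ConvexOn ℝ Set.univ f)
    (x y : E) : 0 ≤ ⟪gradient f x - gradient f y, x - y⟫ := by
  set v := x - y with hv
  have hdiff : Differentiable ℝ f := hf.differentiable (by simp)
  have key : ∀ t : ℝ, HasDerivAt (fun t : ℝ => f (y + t • v))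
      ⟪gradient f (y + t • v), v⟫ t := by
    intro t
    have h1 : HasDerivAt (fun t : ℝ => y + t • v) v t := by
      simpa using ((hasDerivAt_id t).smul_const v).const_add y
    have h2 := (hdiff (y + t • v)).hasFDerivAt.comp_hasDerivAt t h1
    simpa [obs_inner_gradient, Function.comp_def] using h2
  have hφc : ConvexOn ℝ Set.univ (fun t : ℝ => f (y + t • v)) := by
    have h := hc.comp_affineMap (AffineMap.lineMap y (y + v) : ℝ →ᵃ[ℝ] E)
    have he : (fun t : ℝ => f (y + t • v)) = f ∘ (AffineMap.lineMap y (y + v) : ℝ →ᵃ[ℝ] E) := by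
      funext t
      simp [AffineMap.lineMap_apply, add_comm]
    rw [he]
    simpa using h
  have hmono := hφc.monotoneOn_deriv (fun t _ => (key t).differentiableAt)
  have h01 := hmono (mem_univ (0:ℝ)) (mem_univ (1:ℝ)) zero_le_one
  rw [(key 0).deriv, (key 1).deriv] at h01
  have e0 : y + (0:ℝ) • v = y := by simp
  have e1 : y + (1:ℝ) • v = x := by simp [hv]
  rw [e0, e1] at h01
  rw [inner_sub_left]
  linarith

lemma obs_hasDerivAt_line {f : E → ℝ} (hf : ContDiff ℝ (⊤ : ℕ∞) f) (x v : E) (t : ℝ) :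
    HasDerivAt (fun t : ℝ => ⟪gradient f (x + t • v), v⟫)
      ⟪fderiv ℝ (gradient f) (x + t • v) v, v⟫ t := by
  have hg : Differentiable ℝ (gradient f) := (obs_gradient_contDiff hf).differentiable (by simp)
  have h1 : HasDerivAt (fun s : ℝ => x + s • v) v t := by
    simpa using ((hasDerivAt_id t).smul_const v).const_add x
  have h2 : HasDerivAt (fun s : ℝ => gradient f (x + s • v))
      (fderiv ℝ (gradient f) (x + t • v) v) t := by
    have h := (hg (x + t • v)).hasFDerivAt.comp_hasDerivAt t h1
    exact h
  have h3 := (innerSL ℝ v).hasFDerivAt.comp_hasDerivAt t h2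
  simpa only [Function.comp_def, innerSL_apply_apply, real_inner_comm] using h3

lemma obs_line_mono {f : E → ℝ} (hf : ContDiff ℝ (⊤ : ℕ∞) f) (hc : ConvexOn ℝ Set.univ f)
    (x v : E) : Monotone (fun t : ℝ => ⟪gradient f (x + t • v), v⟫) := by
  intro s t hst
  rcases eq_or_lt_of_le hst with rfl | hlt
  · exact le_rfl
  · have h := obs_grad_mono hf hc (x + t • v) (x + s • v)
    have h2 : (x + t • v) - (x + s • v) = (t - s) • v := by
      rw [sub_smul]; abel
    rw [h2, real_inner_smul_right, inner_sub_left] at h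
    have hts : 0 < t - s := sub_pos.2 hlt
    simp only
    nlinarith

lemma obs_monotone_hasDerivAt_nonneg {ψ : ℝ → ℝ} {d t : ℝ} (hmono : Monotone ψ)
    (hd : HasDerivAt ψ d t) : 0 ≤ d := by
  have h := hasDerivAt_iff_tendsto_slope.1 hd
  have h2 : Filter.Tendsto (slope ψ t) (nhdsWithin t (Set.Ioi t)) (nhds d) :=
    h.mono_left (nhdsWithin_mono t fun y hy => ne_of_gt hy)
  refine ge_of_tendsto h2 ?_
  filter_upwards [self_mem_nhdsWithin] with y hy
  have : (0:ℝ) < y - t := sub_pos.2 hy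
  rw [slope_def_field]
  exact div_nonneg (sub_nonneg.2 (hmono (le_of_lt hy))) this.le

lemma obs_quadform_nonneg {f : E → ℝ} (hf : ContDiff ℝ (⊤ : ℕ∞) f) (hc : ConvexOn ℝ Set.univ f)
    (x v : E) : 0 ≤ ⟪fderiv ℝ (gradient f) x v, v⟫ := by
  have hmono := obs_line_mono hf hc x v
  have hd := obs_hasDerivAt_line hf x v 0
  have e0 : x + (0:ℝ) • v = x := by simp
  rw [e0] at hd
  exact obs_monotone_hasDerivAt_nonneg hmono hd

lemma obs_hess_symm {f : E → ℝ} (hf : ContDiff ℝ (⊤ : ℕ∞) f) (x u v : E) :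
    ⟪fderiv ℝ (gradient f) x u, v⟫ = ⟪fderiv ℝ (gradient f) x v, u⟫ := by
  set f' := fderiv ℝ f with hf'def
  have hder : ∀ y, HasFDerivAt f (f' y) y := fun y =>
    ((hf.differentiable (by simp)) y).hasFDerivAt
  have hf'c : ContDiff ℝ (⊤ : ℕ∞) f' := hf.fderiv_right (by simp)
  set f'' := fderiv ℝ f' x with hf''def
  have hx : HasFDerivAt f' f'' x := ((hf'c.differentiable (by simp)) x).hasFDerivAt
  have hsymm := second_derivative_symmetric hder hx
  set T := (InnerProductSpace.toDual ℝ E).symm.toContinuousLinearEquiv.toContinuousLinearMap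
  have hT : HasFDerivAt (gradient f) (T.comp f'') x := (T.hasFDerivAt).comp x hx
  have hfd : fderiv ℝ (gradient f) x = T.comp f'' := hT.fderiv
  rw [hfd]
  have happ : ∀ w z : E, ⟪(T.comp f'') w, z⟫ = f'' w z := fun w z =>
    InnerProductSpace.toDual_symm_apply
  rw [happ, happ, hsymm u v]

lemma obs_psd_ker {f : E → ℝ} (hf : ContDiff ℝ (⊤ : ℕ∞) f) (hc : ConvexOn ℝ Set.univ f)
    (x v : E) (h0 : ⟪fderiv ℝ (gradient f) x v, v⟫ = 0) :
    fderiv ℝ (gradient f) x v = 0 := by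
  set H := fderiv ℝ (gradient f) x with hH
  have hw : ∀ w : E, ⟪H v, w⟫ = 0 := by
    intro w
    by_contra hne
    set a := ⟪H v, w⟫ with ha
    set b := ⟪H w, w⟫ with hb
    have hbn : 0 ≤ b := obs_quadform_nonneg hf hc x w
    have key : ∀ t : ℝ, 0 ≤ 2 * t * a + t ^ 2 * b := by
      intro t
      have hq := obs_quadform_nonneg hf hc x (v + t • w)
      have hsym : ⟪H w, v⟫ = a := by
        rw [ha, obs_hess_symm hf x w v, real_inner_comm]
      have expand : ⟪H (v + t • w), v + t • w⟫ = 2 * t * a + t ^ 2 * b := by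
        rw [map_add, H.map_smul]
        simp only [inner_add_left, inner_add_right, real_inner_smul_left,
          real_inner_smul_right]
        rw [hsym, h0, ← ha, ← hb]
        ring
      rwa [expand] at hq
    have hbp : (0:ℝ) < b + 1 := by linarith
    have hkey := key (-(a / (b + 1)))
    have expand2 : 2 * (-(a / (b + 1))) * a + (-(a / (b + 1))) ^ 2 * b
        = -(a ^ 2 * (b + 2)) / (b + 1) ^ 2 := by
      field_simp
      ring
    rw [expand2] at hkey
    have hpos : 0 < a ^ 2 * (b + 2) := by
      have : a ^ 2 > 0 := pow_pos (abs_pos.2 hne) 2 |>.trans_eq (sq_abs a)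
      nlinarith
    have : 0 < a ^ 2 * (b + 2) / (b + 1) ^ 2 := by positivity
    rw [neg_div] at hkey
    linarith
  have := hw (H v)
  rwa [real_inner_self_eq_norm_sq, pow_eq_zero_iff (by norm_num), norm_eq_zero] at this

lemma obs_grad_injective [FiniteDimensional ℝ E] {f : E → ℝ} (hf : ContDiff ℝ (⊤ : ℕ∞) f)
    (hc : ConvexOn ℝ Set.univ f)
    (hdet : ∀ x, LinearMap.det (fderiv ℝ (gradient f) x).toLinearMap ≠ 0) :
    Function.Injective (gradient f) := by
  intro a b hab
  by_contra hne
  set v := b - a with hv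
  set ψ := fun t : ℝ => ⟪gradient f (a + t • v), v⟫ with hψ
  have hmono : Monotone ψ := obs_line_mono hf hc a v
  have h01 : ψ 1 = ψ 0 := by
    simp only [hψ, one_smul, zero_smul, add_zero]
    rw [show a + (b - a) = b by abel, hab]
  have hconst : ∀ t ∈ Set.Icc (0:ℝ) 1, ψ t = ψ 0 := fun t ht =>
    le_antisymm (h01 ▸ hmono ht.2) (hmono ht.1)
  have heq : ψ =ᶠ[nhds (1/2 : ℝ)] fun _ => ψ 0 := by
    filter_upwards [Icc_mem_nhds (by norm_num : (0:ℝ) < 1/2) (by norm_num : (1/2:ℝ) < 1)]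
      with t ht using hconst t ht
  have hd := obs_hasDerivAt_line hf a v (1/2)
  have hd0 : HasDerivAt ψ 0 (1/2) := by
    exact (hasDerivAt_const (1/2 : ℝ) (ψ 0)).congr_of_eventuallyEq heq
  have hval : ⟪fderiv ℝ (gradient f) (a + (1/2:ℝ) • v) v, v⟫ = 0 := hd.unique hd0
  have hker := obs_psd_ker hf hc (a + (1/2:ℝ) • v) v hval
  set c := a + (1/2:ℝ) • v
  have hinj : Function.Injective (fderiv ℝ (gradient f) c).toLinearMap :=
    (LinearMap.equivOfDetNeZero _ (hdet c)).injective
  have hv0 : v = 0 := by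
    have : (fderiv ℝ (gradient f) c).toLinearMap v
        = (fderiv ℝ (gradient f) c).toLinearMap 0 := by
      simpa using hker
    exact hinj this
  have hba : b - a = 0 := hv ▸ hv0
  exact hne (sub_eq_zero.1 hba).symm

set_option maxHeartbeats 1000000 in
lemma obs_grad_surj_interior [FiniteDimensional ℝ E] {f : E → ℝ} (hf : ContDiff ℝ (⊤ : ℕ∞) f)
    (hc : ConvexOn ℝ Set.univ f) {p : E}
    (hp : p ∈ interior (closure (Set.range (gradient f)))) :
    p ∈ Set.range (gradient f) := by
  set g := gradient f with hg
  have hgc : Continuous g := (obs_gradient_contDiff hf).continuous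
  set S := Set.range g with hS
  obtain ⟨ε, εpos, hball⟩ : ∃ ε > 0, ball p ε ⊆ closure S :=
    Metric.mem_nhds_iff.1 (mem_interior_iff_mem_nhds.1 hp)
  have hzex : ∀ u : E, u ∈ sphere (0:E) 1 → ∃ zz : E, ‖g zz - (p + (ε/2) • u)‖ < ε/16 := by
    intro u hu
    have hq : p + (ε/2) • u ∈ closure S := by
      apply hball
      rw [mem_ball_iff_norm]
      have : p + (ε/2) • u - p = (ε/2) • u := by abel
      rw [this, norm_smul, mem_sphere_zero_iff_norm.1 hu]
      rw [Real.norm_eq_abs, abs_of_pos (by positivity)]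
      linarith
    rcases Metric.mem_closure_iff.1 hq (ε/16) (by positivity) with ⟨s, hsS, hds⟩
    rcases hsS with ⟨zz, rfl⟩
    refine ⟨zz, ?_⟩
    rw [← dist_eq_norm, dist_comm]
    exact hds
  choose! z hz using hzex
  obtain ⟨t, htsub, htcov⟩ := (isCompact_sphere (0:E) 1).elim_nhds_subcover
      (fun u => ball u (1/8)) (fun u _ => ball_mem_nhds u (by norm_num))
  set R0 : ℝ := 1 + ∑ u ∈ t, ‖z u‖ with hR0
  have hR0pos : 0 < R0 := by
    have : 0 ≤ ∑ u ∈ t, ‖z u‖ := Finset.sum_nonneg fun u _ => norm_nonneg _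
    linarith
  have hR0bound : ∀ u ∈ t, ‖z u‖ ≤ R0 := fun u hu => by
    have := Finset.single_le_sum (f := fun u => ‖z u‖) (fun u _ => norm_nonneg _) hu
    linarith
  set R : ℝ := 6 * R0 + 1 with hRdef
  have hclaim : ∀ x : E, ‖g x - p‖ < ε/16 → ‖x‖ ≤ R := by
    intro x hgx
    by_cases hx0 : x = 0
    · rw [hx0, norm_zero]; positivity
    set u' := ‖x‖⁻¹ • x with hu'
    have hxn : 0 < ‖x‖ := norm_pos_iff.2 hx0
    have hu'mem : u' ∈ sphere (0:E) 1 := by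
      rw [mem_sphere_zero_iff_norm, hu', norm_smul, Real.norm_eq_abs,
        abs_of_pos (inv_pos.2 hxn), inv_mul_cancel₀ hxn.ne']
    obtain ⟨u, hut, hu'ball⟩ := Set.mem_iUnion₂.1 (htcov hu'mem)
    have husph : u ∈ sphere (0:E) 1 := htsub u hut
    have hun : ‖u‖ = 1 := mem_sphere_zero_iff_norm.1 husph
    have hz1 : ‖g (z u) - (p + (ε/2) • u)‖ < ε/16 := hz u husph
    have hi : ε/2 - ε/16 ≤ ⟪g (z u) - p, u⟫ := by
      have hsplit : ⟪g (z u) - p, u⟫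
          = ⟪g (z u) - (p + (ε/2) • u), u⟫ + (ε/2) * ⟪u, u⟫ := by
        rw [← real_inner_smul_left, ← inner_add_left]
        congr 1
        abel
      rw [hsplit, real_inner_self_eq_norm_sq, hun]
      have habs := abs_real_inner_le_norm (g (z u) - (p + (ε/2) • u)) u
      rw [hun, mul_one] at habs
      have hneg := neg_abs_le ⟪g (z u) - (p + (ε/2) • u), u⟫
      nlinarith
    have hii : ‖g (z u) - p‖ ≤ ε := by
      have hsplit : g (z u) - p = (g (z u) - (p + (ε/2) • u)) + (ε/2) • u := by abel
      rw [hsplit]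
      have h1 := norm_add_le (g (z u) - (p + (ε/2) • u)) ((ε/2) • u)
      have h2 : ‖(ε/2) • u‖ = ε/2 := by
        rw [norm_smul, hun, Real.norm_eq_abs, abs_of_pos (by positivity), mul_one]
      linarith
    have hiii : ε/4 ≤ ⟪g (z u) - p, u'⟫ := by
      have hdd : ⟪g (z u) - p, u'⟫ = ⟪g (z u) - p, u⟫ + ⟪g (z u) - p, u' - u⟫ := by
        rw [← inner_add_right]
        congr 1
        abel
      have habs : |⟪g (z u) - p, u' - u⟫| ≤ ‖g (z u) - p‖ * ‖u' - u‖ :=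
        abs_real_inner_le_norm _ _
      have hdist : ‖u' - u‖ ≤ 1/8 := by
        have hmem := mem_ball.1 hu'ball
        rw [dist_eq_norm] at hmem
        linarith
      have hneg := neg_abs_le ⟪g (z u) - p, u' - u⟫
      have hprod : ‖g (z u) - p‖ * ‖u' - u‖ ≤ ε * (1/8) :=
        mul_le_mul hii hdist (norm_nonneg _) εpos.le
      nlinarith
    have hmono := obs_grad_mono hf hc x (z u)
    have hexp : ⟪g x - g (z u), x - z u⟫
        = ⟪g x - p, x - z u⟫ + ⟪p - g (z u), x⟫ - ⟪p - g (z u), z u⟫ := by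
      simp only [inner_sub_left, inner_sub_right]
      ring
    have hA : ⟪g x - p, x - z u⟫ ≤ (ε/16) * (‖x‖ + R0) := by
      have h1 := real_inner_le_norm (g x - p) (x - z u)
      have h2 : ‖x - z u‖ ≤ ‖x‖ + R0 := by
        have := norm_sub_le x (z u)
        have := hR0bound u hut
        linarith
      nlinarith [norm_nonneg (g x - p), norm_nonneg (x - z u), hxn]
    have hB : ⟪p - g (z u), x⟫ ≤ -(ε/4) * ‖x‖ := by
      have hxu : x = ‖x‖ • u' := by
        rw [hu', smul_smul, mul_inv_cancel₀ hxn.ne', one_smul]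
      calc ⟪p - g (z u), x⟫ = ‖x‖ * ⟪p - g (z u), u'⟫ := by
            conv_lhs => rw [hxu]
            rw [real_inner_smul_right]
        _ ≤ -(ε/4) * ‖x‖ := by
            have : ⟪p - g (z u), u'⟫ = -⟪g (z u) - p, u'⟫ := by
              rw [show p - g (z u) = -(g (z u) - p) by abel, inner_neg_left]
            rw [this]
            nlinarith
    have hC : -⟪p - g (z u), z u⟫ ≤ ε * R0 := by
      have heq2 : -⟪p - g (z u), z u⟫ = ⟪g (z u) - p, z u⟫ := by
        rw [show p - g (z u) = -(g (z u) - p) by abel, inner_neg_left]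
        ring
      rw [heq2]
      have h1 := real_inner_le_norm (g (z u) - p) (z u)
      have h2 := hR0bound u hut
      nlinarith [norm_nonneg (g (z u) - p), norm_nonneg (z u)]
    by_contra hcon
    push_neg at hcon
    clear_value R R0
    rw [hexp] at hmono
    have hxR : 6 * R0 + 1 < ‖x‖ := hRdef ▸ hcon
    have hkey2 : 0 < ε * (‖x‖ - (6 * R0 + 1)) := mul_pos εpos (sub_pos.2 hxR)
    have h1 := add_le_add (add_le_add hA hB) hC
    have htest : 0 ≤ ε / 16 * (‖x‖ + R0) + -(ε / 4) * ‖x‖ + ε * R0 := by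
      linarith [hmono, h1]
    linarith only [htest, mul_pos εpos hR0pos, hkey2, εpos]
  have hpcl : p ∈ closure (g '' closedBall (0:E) R) := by
    rw [Metric.mem_closure_iff]
    intro r hr
    have hpS : p ∈ closure S := hball (mem_ball_self εpos)
    obtain ⟨s, hsS, hds⟩ := Metric.mem_closure_iff.1 hpS (min r (ε/16)) (by positivity)
    obtain ⟨x, rfl⟩ := hsS
    refine ⟨g x, ⟨x, ?_, rfl⟩, lt_of_lt_of_le hds (min_le_left _ _)⟩
    rw [mem_closedBall_zero_iff]
    apply hclaim
    rw [← dist_eq_norm, dist_comm]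
    exact hds.trans_le (min_le_right _ _)
  have hcl : IsClosed (g '' closedBall (0:E) R) :=
    ((isCompact_closedBall (0:E) R).image hgc).isClosed
  rcases hcl.closure_eq ▸ hpcl with ⟨x, _, hx⟩
  exact ⟨x, hx⟩

end Aux


set_option maxHeartbeats 2000000 in
/-- The obstruction lemma (Lemma 5.4): solvability of the coupled real
Monge–Ampère system forces `∑ᵢ A_{Pᵢ}(Vᵢ) = 0`. -/
theorem stmt0 {n k : ℕ} (hn : 1 ≤ n) (hk : 1 ≤ k)
    (P : Fin k → Set (EuclideanSpace ℝ (Fin n)))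
    (hPcpt : ∀ i, IsCompact (P i)) (hPconv : ∀ i, Convex ℝ (P i))
    (hPint : ∀ i, (interior (P i)).Nonempty)
    (V : Fin k → EuclideanSpace ℝ (Fin n))
    (f : Fin k → EuclideanSpace ℝ (Fin n) → ℝ)
    (hsmooth : ∀ i, ContDiff ℝ (⊤ : ℕ∞) (f i))
    (hconv : ∀ i, ConvexOn ℝ Set.univ (f i))
    (hgrad : ∀ i, closure (Set.range (gradient (f i))) = P i)
    (hPDE : ∀ x, ∀ i,
      Real.exp ⟪V i, gradient (f i) x⟫ / weightedVol (P i) (V i) * hessDet (f i) x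
        = Real.exp (-∑ j, f j x)) :
    ∑ i, weightedBary (P i) (V i) = 0 := by
  classical
  set G : EuclideanSpace ℝ (Fin n) → ℝ := fun x => Real.exp (-∑ j, f j x) with hGdef
  -- continuity of the weight
  have hexpcont : ∀ i, Continuous fun p : EuclideanSpace ℝ (Fin n) => Real.exp ⟪V i, p⟫ :=
    fun i => Real.continuous_exp.comp (continuous_const.inner continuous_id)
  -- positivity of the weighted volume
  have hVolpos : ∀ i, 0 < weightedVol (P i) (V i) := by
    intro i
    have hint : IntegrableOn (fun p => Real.exp ⟪V i, p⟫) (P i) volume :=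
      (hexpcont i).continuousOn.integrableOn_compact (hPcpt i)
    rw [weightedVol, setIntegral_pos_iff_support_of_nonneg_ae]
    · have hsupp : Function.support (fun p : EuclideanSpace ℝ (Fin n) =>
          Real.exp ⟪V i, p⟫) = Set.univ := by
        ext p; simp [Real.exp_ne_zero]
      rw [hsupp, Set.univ_inter]
      have h1 : 0 < volume (interior (P i)) :=
        isOpen_interior.measure_pos _ (hPint i)
      exact h1.trans_le (measure_mono interior_subset)
    · filter_upwards with p using (Real.exp_pos _).le
    · exact hint
  -- positivity of the Hessian determinant
  have hdetpos : ∀ i x, 0 < hessDet (f i) x := by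
    intro i x
    have h := hPDE x i
    have ha : 0 < Real.exp ⟪V i, gradient (f i) x⟫ / weightedVol (P i) (V i) :=
      div_pos (Real.exp_pos _) (hVolpos i)
    nlinarith [Real.exp_pos (-∑ j, f j x)]
  have hgsmooth : ∀ i, ContDiff ℝ (⊤ : ℕ∞) (gradient (f i)) :=
    fun i => obs_gradient_contDiff (hsmooth i)
  have hdet' : ∀ i x, LinearMap.det (fderiv ℝ (gradient (f i)) x).toLinearMap ≠ 0 :=
    fun i x => ne_of_gt (hdetpos i x)
  have hinj : ∀ i, Function.Injective (gradient (f i)) :=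
    fun i => obs_grad_injective (hsmooth i) (hconv i) (hdet' i)
  -- the range of each gradient is open
  have hSopen : ∀ i, IsOpen (Set.range (gradient (f i))) := by
    intro i
    have hex : ∀ x, ∃ e : (EuclideanSpace ℝ (Fin n)) ≃L[ℝ] (EuclideanSpace ℝ (Fin n)),
        (e : EuclideanSpace ℝ (Fin n) →L[ℝ] EuclideanSpace ℝ (Fin n))
          = fderiv ℝ (gradient (f i)) x := by
      intro x
      refine ⟨(LinearMap.equivOfDetNeZero _ (hdet' i x)).toContinuousLinearEquiv, ?_⟩
      ext v
      rfl
    choose e he using hex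
    have hstrict : ∀ x, HasStrictFDerivAt (gradient (f i))
        ((e x : EuclideanSpace ℝ (Fin n) →L[ℝ] EuclideanSpace ℝ (Fin n))) x := by
      intro x
      rw [he x]
      exact (hgsmooth i).hasStrictFDerivAt (by simp)
    exact (isOpenMap_of_hasStrictFDerivAt_equiv hstrict).isOpen_range
  have hSsub : ∀ i, Set.range (gradient (f i)) ⊆ P i :=
    fun i => (hgrad i) ▸ subset_closure
  have hSint : ∀ i, interior (P i) ⊆ Set.range (gradient (f i)) := by
    intro i p hp
    exact obs_grad_surj_interior (hsmooth i) (hconv i) (by rw [hgrad i]; exact hp)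
  have hnull : ∀ i, volume (P i \ Set.range (gradient (f i))) = 0 := by
    intro i
    have hsub2 : P i \ Set.range (gradient (f i)) ⊆ frontier (P i) := by
      intro q hq
      rw [frontier, (hPcpt i).isClosed.closure_eq]
      exact ⟨hq.1, fun hint => hq.2 (hSint i hint)⟩
    exact measure_mono_null hsub2 ((hPconv i).addHaar_frontier volume)
  have hae : ∀ i, (Set.range (gradient (f i)) : Set (EuclideanSpace ℝ (Fin n)))
      =ᵐ[volume] (P i) := by
    intro i
    refine MeasureTheory.ae_eq_set.2 ⟨?_, hnull i⟩
    rw [Set.diff_eq_empty.2 (hSsub i)]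
    exact measure_empty
  have hfderiv : ∀ i x, HasFDerivAt (gradient (f i)) (fderiv ℝ (gradient (f i)) x) x :=
    fun i x => ((hgsmooth i).differentiable (by simp) x).hasFDerivAt
  -- change of variables, vector version
  have hCOVv : ∀ i (gg : EuclideanSpace ℝ (Fin n) → EuclideanSpace ℝ (Fin n)),
      ∫ p in Set.range (gradient (f i)), gg p
        = ∫ x, |(fderiv ℝ (gradient (f i)) x).det| • gg (gradient (f i) x) := by
    intro i gg
    have h := integral_image_eq_integral_abs_det_fderiv_smul volume MeasurableSet.univ
      (fun x _ => (hfderiv i x).hasFDerivWithinAt) ((hinj i).injOn) gg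
    rw [Set.image_univ] at h
    rw [h, Measure.restrict_univ]
  have hCOVs : ∀ i (gg : EuclideanSpace ℝ (Fin n) → ℝ),
      ∫ p in Set.range (gradient (f i)), gg p
        = ∫ x, |(fderiv ℝ (gradient (f i)) x).det| • gg (gradient (f i) x) := by
    intro i gg
    have h := integral_image_eq_integral_abs_det_fderiv_smul volume MeasurableSet.univ
      (fun x _ => (hfderiv i x).hasFDerivWithinAt) ((hinj i).injOn) gg
    rw [Set.image_univ] at h
    rw [h, Measure.restrict_univ]
  -- |det| equals hessDet
  have habsdet : ∀ i x, |(fderiv ℝ (gradient (f i)) x).det| = hessDet (f i) x :=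
    fun i x => abs_of_pos (hdetpos i x)
  -- pointwise identity from the PDE
  have hpt : ∀ i x, hessDet (f i) x * Real.exp ⟪V i, gradient (f i) x⟫
      = weightedVol (P i) (V i) * G x := by
    intro i x
    have h := hPDE x i
    rw [div_mul_eq_mul_div, div_eq_iff (hVolpos i).ne'] at h
    rw [hGdef]
    simp only
    linear_combination h
  -- integrability of the weighted position over `P i`
  have hIbase : ∀ i, IntegrableOn
      (fun p : EuclideanSpace ℝ (Fin n) => Real.exp ⟪V i, p⟫ • p) (P i) volume := fun i =>
    ((hexpcont i).smul continuous_id).continuousOn.integrableOn_compact (hPcpt i)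
  have hIbaseS : ∀ i, IntegrableOn (fun p : EuclideanSpace ℝ (Fin n) => Real.exp ⟪V i, p⟫ • p)
      (Set.range (gradient (f i))) volume := fun i => (hIbase i).mono_set (hSsub i)
  have hItrans : ∀ i, Integrable (fun x =>
      |(fderiv ℝ (gradient (f i)) x).det|
        • (Real.exp ⟪V i, gradient (f i) x⟫ • gradient (f i) x)) volume := by
    intro i
    have h := (integrableOn_image_iff_integrableOn_abs_det_fderiv_smul volume
      MeasurableSet.univ (fun x _ => (hfderiv i x).hasFDerivWithinAt) ((hinj i).injOn)
      (fun p : EuclideanSpace ℝ (Fin n) => Real.exp ⟪V i, p⟫ • p)).1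
    rw [Set.image_univ] at h
    have h2 := h (hIbaseS i)
    rwa [integrableOn_univ] at h2
  have hptv : ∀ i x, |(fderiv ℝ (gradient (f i)) x).det|
      • (Real.exp ⟪V i, gradient (f i) x⟫ • gradient (f i) x)
      = weightedVol (P i) (V i) • (G x • gradient (f i) x) := by
    intro i x
    rw [habsdet i x, smul_smul, smul_smul, hpt i x]
  have hIvec : ∀ i, Integrable (fun x => G x • gradient (f i) x) volume := by
    intro i
    have h4 := ((hItrans i).congr
      (Filter.Eventually.of_forall fun x => hptv i x)).smul ((weightedVol (P i) (V i))⁻¹)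
    refine h4.congr (Filter.Eventually.of_forall fun x => ?_)
    simp only [Pi.smul_apply, smul_smul]
    rw [← mul_assoc, inv_mul_cancel₀ (hVolpos i).ne', one_mul]
  -- integrability of `G`
  have hIG : Integrable G volume := by
    set i : Fin k := ⟨0, hk⟩
    have hbase : IntegrableOn (fun p : EuclideanSpace ℝ (Fin n) => Real.exp ⟪V i, p⟫)
        (Set.range (gradient (f i))) volume :=
      ((hexpcont i).continuousOn.integrableOn_compact (hPcpt i)).mono_set (hSsub i)
    have h := (integrableOn_image_iff_integrableOn_abs_det_fderiv_smul volume
      MeasurableSet.univ (fun x _ => (hfderiv i x).hasFDerivWithinAt) ((hinj i).injOn)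
      (fun p : EuclideanSpace ℝ (Fin n) => Real.exp ⟪V i, p⟫)).1
    rw [Set.image_univ] at h
    have h2 := h hbase
    rw [integrableOn_univ] at h2
    have h3 : ∀ x, |(fderiv ℝ (gradient (f i)) x).det|
        • Real.exp ⟪V i, gradient (f i) x⟫ = weightedVol (P i) (V i) • G x := by
      intro x
      rw [habsdet i x, smul_eq_mul, smul_eq_mul, hpt i x]
    have h4 := (h2.congr (Filter.Eventually.of_forall fun x => h3 x)).smul
      ((weightedVol (P i) (V i))⁻¹)
    refine h4.congr (Filter.Eventually.of_forall fun x => ?_)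
    simp only [Pi.smul_apply, smul_smul, inv_mul_cancel₀ (hVolpos i).ne', one_smul]
  -- the barycenter identity
  have hbary : ∀ i, weightedBary (P i) (V i) = ∫ x, G x • gradient (f i) x := by
    intro i
    rw [weightedBary]
    have hset : (∫ p in P i, Real.exp ⟪V i, p⟫ • p)
        = ∫ p in Set.range (gradient (f i)), Real.exp ⟪V i, p⟫ • p :=
      (setIntegral_congr_set (hae i)).symm
    rw [hset, hCOVv i (fun p => Real.exp ⟪V i, p⟫ • p)]
    have h5 : (∫ x, |(fderiv ℝ (gradient (f i)) x).det|
          • (fun p : EuclideanSpace ℝ (Fin n) => Real.exp ⟪V i, p⟫ • p) (gradient (f i) x))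
        = ∫ x, weightedVol (P i) (V i) • (G x • gradient (f i) x) := by
      refine integral_congr_ae (Filter.Eventually.of_forall fun x => ?_)
      simp only
      exact hptv i x
    rw [h5, integral_smul, smul_smul, inv_mul_cancel₀ (hVolpos i).ne', one_smul]
  -- derivative of G
  have hGd : ∀ x, HasFDerivAt G
      (Real.exp (-∑ j, f j x) • (-(∑ j, fderiv ℝ (f j) x))) x := by
    intro x
    have hu : HasFDerivAt (fun y => ∑ j, f j y) (∑ j, fderiv ℝ (f j) x) x :=
      HasFDerivAt.fun_sum fun j _ => ((hsmooth j).differentiable (by simp) x).hasFDerivAt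
    have h3 := hu.neg.exp
    simpa [hGdef] using h3
  have hGdiff : Differentiable ℝ G := fun x => (hGd x).differentiableAt
  have hGfderiv : ∀ x v, fderiv ℝ G x v = -∑ j, ⟪v, G x • gradient (f j) x⟫ := by
    intro x v
    rw [(hGd x).fderiv]
    have hj : ∀ j : Fin k, ⟪v, G x • gradient (f j) x⟫ = G x * fderiv ℝ (f j) x v :=
      fun j => by rw [real_inner_smul_right, real_inner_comm, obs_inner_gradient]
    simp only [hj, ContinuousLinearMap.smul_apply, ContinuousLinearMap.neg_apply,
      ContinuousLinearMap.coe_sum', Finset.sum_apply, smul_eq_mul, mul_neg, Finset.mul_sum,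
      hGdef, neg_neg]
    simp only [real_inner_comm _ v, real_inner_smul_left, obs_inner_gradient]
  -- integrability of directional derivatives of G
  have hIdir : ∀ v : EuclideanSpace ℝ (Fin n),
      Integrable (fun x => fderiv ℝ G x v) volume := by
    intro v
    have hsumI : Integrable (fun x => ∑ j, ⟪v, G x • gradient (f j) x⟫) volume := by
      refine integrable_finset_sum _ fun j _ => ?_
      have := ContinuousLinearMap.integrable_comp (innerSL ℝ v) (hIvec j)
      exact this
    refine hsumI.neg.congr (Filter.Eventually.of_forall fun x => ?_)
    simp only [Pi.neg_apply]
    exact (hGfderiv x v).symm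
  -- integration by parts: the integral of each directional derivative vanishes
  have hIBP : ∀ v : EuclideanSpace ℝ (Fin n), (∫ x, fderiv ℝ G x v) = 0 := by
    intro v
    have h1 : Integrable (fun x => fderiv ℝ G x v * (fun _ : EuclideanSpace ℝ (Fin n) =>
        (1:ℝ)) x) volume := by simpa using hIdir v
    have h2 : Integrable (fun x => G x * fderiv ℝ (fun _ : EuclideanSpace ℝ (Fin n) =>
        (1:ℝ)) x v) volume := by
      have he : (fun x => G x * fderiv ℝ (fun _ : EuclideanSpace ℝ (Fin n) => (1:ℝ)) x v)
          = fun _ => (0:ℝ) := by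
        funext x
        simp
      rw [he]
      exact integrable_zero _ _ _
    have h3 : Integrable (fun x => G x * (fun _ : EuclideanSpace ℝ (Fin n) => (1:ℝ)) x)
        volume := by simpa using hIG
    have h0 := integral_mul_fderiv_eq_neg_fderiv_mul_of_integrable h1 h2 h3 (fun x _ => hGdiff x)
      (fun x _ => differentiableAt_const (1:ℝ))
    simp only [fderiv_fun_const, Pi.zero_apply, ContinuousLinearMap.zero_apply, mul_zero,
      mul_one, integral_zero] at h0
    linarith
  -- final assembly
  have hsum : ∑ i, weightedBary (P i) (V i) = ∫ x, G x • ∑ i, gradient (f i) x := by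
    rw [Finset.sum_congr rfl fun i _ => hbary i]
    rw [← integral_finset_sum _ fun i _ => hIvec i]
    exact integral_congr_ae (Filter.Eventually.of_forall fun x => (Finset.smul_sum).symm)
  rw [hsum]
  have hItot : Integrable (fun x => G x • ∑ i, gradient (f i) x) volume := by
    refine (integrable_finset_sum Finset.univ fun i _ => hIvec i).congr
      (Filter.Eventually.of_forall fun x => ?_)
    exact (Finset.smul_sum).symm
  refine integral_eq_zero_of_forall_integral_inner_eq_zero ℝ _ hItot fun c => ?_
  have hptc : ∀ x, ⟪c, G x • ∑ i, gradient (f i) x⟫ = -(fderiv ℝ G x c) := by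
    intro x
    rw [hGfderiv x c, neg_neg, real_inner_smul_right, inner_sum, Finset.mul_sum]
    exact Finset.sum_congr rfl fun j _ => (real_inner_smul_right c _ (G x)).symm
  calc (∫ x, ⟪c, G x • ∑ i, gradient (f i) x⟫)
      = ∫ x, -(fderiv ℝ G x c) :=
        integral_congr_ae (Filter.Eventually.of_forall fun x => hptc x)
    _ = -∫ x, fderiv ℝ G x c := integral_neg _
    _ = 0 := by rw [hIBP c, neg_zero]
end

section
/- Let P ⊆ ℝⁿ be a compact convex set with nonempty interior. Then A_P(V) lies in the interior of P for every V ∈ ℝⁿ, and the closure of the image {A_P(V) : V ∈ ℝⁿ} equals P. -/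
/-!
`V ↦ log Vol_V(P)` is differentiable with gradient `A_P(V)`. For `x` in the interior of `P`,
`V ↦ log Vol_V(P) - ⟪V, x⟫` grows at least linearly in `‖V‖`, because a small ball of `P` lies
in the half-space `⟪V, p - x⟫ ≥ c ‖V‖`; so it attains a minimum, where `A_P(V) = x`.
Conversely, a functional `f` separating `A_P(V)` from `interior P` would satisfy
`f ≤ f (A_P(V))` on `P`, strictly on an open set, which is impossible for the
`e^{⟪V, p⟫}`-weighted mean of `P`. Hence `A_P` maps onto `interior P`, whose closure is `P`
by convexity.
-/

open scoped RealInnerProductSpace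
open MeasureTheory

open Set Filter Metric Real

theorem setIntegral_pos_of_nonneg_of_pos_of_mem_interior {X : Type*} [TopologicalSpace X]
    [T2Space X] [MeasurableSpace X] [OpensMeasurableSpace X] {μ : Measure X}
    [IsFiniteMeasureOnCompacts μ] [μ.IsOpenPosMeasure] {s : Set X} {f : X → ℝ} {x : X}
    (hs : IsCompact s) (hf : Continuous f) (hf₀ : ∀ y ∈ s, 0 ≤ f y) (hx : x ∈ interior s)
    (hfx : 0 < f x) : 0 < ∫ y in s, f y ∂μ := by
  rw [setIntegral_pos_iff_support_of_nonneg_ae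
    ((ae_restrict_iff' hs.measurableSet).2 (.of_forall hf₀))
    (hf.continuousOn.integrableOn_compact hs)]
  exact (isOpen_interior.inter (isOpen_lt continuous_const hf)).measure_pos μ ⟨x, hx, hfx⟩
    |>.trans_le (measure_mono fun y ⟨hys, hy⟩ => ⟨hy.ne', interior_subset hys⟩)

section ExpInner

variable {E : Type*} [NormedAddCommGroup E] [InnerProductSpace ℝ E]

theorem hasFDerivAt_inner_const_right (x V : E) : HasFDerivAt (fun V => ⟪V, x⟫) (innerSL ℝ x) V :=
  (innerSL ℝ x).hasFDerivAt.congr_of_eventuallyEq (.of_forall fun W => real_inner_comm x W)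

variable [MeasurableSpace E] [BorelSpace E] {μ : Measure E} {s : Set E}

theorem integrableOn_exp_inner [IsFiniteMeasureOnCompacts μ] (hs : IsCompact s) (V : E) :
    IntegrableOn (fun p => exp ⟪V, p⟫) s μ :=
  (by fun_prop : Continuous fun p => exp ⟪V, p⟫).continuousOn.integrableOn_compact hs

theorem integrableOn_exp_inner_smul [IsFiniteMeasureOnCompacts μ] (hs : IsCompact s) (V : E) :
    IntegrableOn (fun p => exp ⟪V, p⟫ • p) s μ :=
  (by fun_prop : Continuous fun p => exp ⟪V, p⟫ • p).continuousOn.integrableOn_compact hs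

theorem hasFDerivAt_setIntegral_exp_inner [FiniteDimensional ℝ E]
    [IsFiniteMeasureOnCompacts μ] (hs : IsCompact s) (V₀ : E) :
    HasFDerivAt (fun V => ∫ p in s, exp ⟪V, p⟫ ∂μ)
      (innerSL ℝ (∫ p in s, exp ⟪V₀, p⟫ • p ∂μ)) V₀ := by
  obtain ⟨C, hC⟩ := ((isCompact_closedBall V₀ 1).prod hs).exists_bound_of_continuousOn
    (f := fun q : E × E => exp ⟪q.1, q.2⟫ • innerSL ℝ q.2) (by fun_prop)
  have hderiv := hasFDerivAt_integral_of_dominated_of_fderiv_le (μ := μ.restrict s)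
    (F' := fun V p => exp ⟪V, p⟫ • innerSL ℝ p) (bound := fun _ => C)
    (closedBall_mem_nhds V₀ one_pos)
    (.of_forall fun V => (integrableOn_exp_inner hs V).aestronglyMeasurable)
    (integrableOn_exp_inner hs V₀)
    ((by fun_prop : Continuous fun p : E => exp ⟪V₀, p⟫ • innerSL ℝ p).aestronglyMeasurable)
    ((ae_restrict_iff' hs.measurableSet).2
      (.of_forall fun p hp V hV => hC (V, p) ⟨hV, hp⟩))
    (integrableOn_const hs.measure_lt_top.ne)
    (.of_forall fun p V _ => (hasFDerivAt_inner_const_right p V).exp)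
  rw [← (innerSL ℝ).integral_comp_comm (integrableOn_exp_inner_smul hs V₀)]
  simpa only [map_smul] using hderiv

theorem measureReal_ball_mul_exp_le_setIntegral_exp_inner [FiniteDimensional ℝ E]
    [μ.IsAddHaarMeasure] (hs : IsCompact s) {x : E} {r : ℝ} (hr : 0 < r) (hxr : ball x r ⊆ s)
    (V : E) :
    μ.real (ball 0 (r / 4)) * exp (⟪V, x⟫ + r / 4 * ‖V‖) ≤ ∫ p in s, exp ⟪V, p⟫ ∂μ := by
  -- `u` is the unit vector in the direction of `V` (or `0`); on the ball of radius `r / 4`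
  -- around `x + (r / 2) • u`, `⟪V, ·⟫` exceeds `⟪V, x⟫` by at least `r / 4 * ‖V‖`.
  set u := ‖V‖⁻¹ • V
  have hu : ‖u‖ ≤ 1 := by
    rw [norm_smul, norm_inv, norm_norm]
    exact inv_mul_le_one_of_le₀ le_rfl (norm_nonneg V)
  have hVu : ⟪V, u⟫ = ‖V‖ := by
    rw [real_inner_smul_right, real_inner_self_eq_norm_sq, sq, ← mul_assoc, inv_mul_mul_self]
  set q := x + (r / 2) • u
  have hqx : ‖q - x‖ ≤ r / 2 := by
    rw [add_sub_cancel_left, norm_smul, norm_of_nonneg (by positivity)]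
    exact mul_le_of_le_one_right (by positivity) hu
  have hball : ball q (r / 4) ⊆ s := fun p hp => hxr <| by
    rw [mem_ball, dist_eq_norm] at hp ⊢
    linarith [norm_sub_le_norm_sub_add_norm_sub p q x]
  have hlower : ∀ p ∈ ball q (r / 4), ⟪V, x⟫ + r / 4 * ‖V‖ ≤ ⟪V, p⟫ := fun p hp => by
    have hpq : ‖p - q‖ ≤ r / 4 := (mem_ball_iff_norm.1 hp).le
    have hsplit : ⟪V, p⟫ = ⟪V, x⟫ + r / 2 * ⟪V, u⟫ + ⟪V, p - q⟫ := by
      rw [← real_inner_smul_right, ← inner_add_right, ← inner_add_right]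
      exact congrArg _ (add_sub_cancel q p).symm
    nlinarith [neg_abs_le ⟪V, p - q⟫, abs_real_inner_le_norm V (p - q), norm_nonneg V]
  calc μ.real (ball 0 (r / 4)) * exp (⟪V, x⟫ + r / 4 * ‖V‖)
      = exp (⟪V, x⟫ + r / 4 * ‖V‖) * μ.real (ball q (r / 4)) := by
        rw [Measure.addHaar_real_ball_center μ q, mul_comm]
    _ ≤ ∫ p in ball q (r / 4), exp ⟪V, p⟫ ∂μ :=
        setIntegral_ge_of_const_le_real measurableSet_ball measure_ball_lt_top.ne
          (fun p hp => exp_le_exp.2 (hlower p hp))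
          ((integrableOn_exp_inner hs V).mono_set hball)
    _ ≤ ∫ p in s, exp ⟪V, p⟫ ∂μ :=
        setIntegral_mono_set (integrableOn_exp_inner hs V)
          (.of_forall fun p => (exp_pos _).le) hball.eventuallyLE

end ExpInner

section WeightedBarycenter

variable {n : ℕ} {P : Set (EuclideanSpace ℝ (Fin n))}

theorem weightedVol_pos (hP : IsCompact P) (hPint : (interior P).Nonempty)
    (V : EuclideanSpace ℝ (Fin n)) : 0 < weightedVol P V :=
  setIntegral_pos_of_nonneg_of_pos_of_mem_interior hP (by fun_prop) (fun _ _ => (exp_pos _).le)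
    hPint.some_mem (exp_pos _)

theorem setIntegral_exp_inner_smul_sub_weightedBary (hP : IsCompact P)
    (hPint : (interior P).Nonempty) (V : EuclideanSpace ℝ (Fin n)) :
    ∫ p in P, exp ⟪V, p⟫ • (p - weightedBary P V) = 0 := by
  simp_rw [smul_sub]
  rw [integral_sub (integrableOn_exp_inner_smul hP V)
    ((integrableOn_exp_inner hP V).smul_const _), integral_smul_const, weightedBary,
    ← weightedVol, smul_inv_smul₀ (weightedVol_pos hP hPint V).ne', sub_self]

theorem hasFDerivAt_log_weightedVol (hP : IsCompact P) (hPint : (interior P).Nonempty)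
    (V : EuclideanSpace ℝ (Fin n)) :
    HasFDerivAt (fun V => log (weightedVol P V)) (innerSL ℝ (weightedBary P V)) V := by
  have := (hasFDerivAt_setIntegral_exp_inner (μ := volume) hP V).log
    (weightedVol_pos hP hPint V).ne'
  rwa [weightedBary, map_smul]

theorem weightedBary_mem_interior (hP : IsCompact P) (hPconv : Convex ℝ P)
    (hPint : (interior P).Nonempty) (V : EuclideanSpace ℝ (Fin n)) :
    weightedBary P V ∈ interior P := by
  set A := weightedBary P V
  by_contra hA
  obtain ⟨f, hf⟩ := geometric_hahn_banach_open_point hPconv.interior isOpen_interior hA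
  have hle : ∀ p ∈ P, f p ≤ f A := by
    intro p hp
    refine closure_minimal (fun a ha => (hf a ha).le)
      (isClosed_le f.continuous continuous_const) ?_
    rw [hPconv.closure_interior_eq_closure_of_nonempty_interior hPint]
    exact subset_closure hp
  obtain ⟨q, hq⟩ := hPint
  have hpos : 0 < ∫ p in P, exp ⟪V, p⟫ * (f A - f p) :=
    setIntegral_pos_of_nonneg_of_pos_of_mem_interior hP (by fun_prop)
      (fun p hp => mul_nonneg (exp_pos _).le (sub_nonneg.2 (hle p hp))) hq
      (mul_pos (exp_pos _) (sub_pos.2 (hf q hq)))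
  have hzero : ∫ p in P, exp ⟪V, p⟫ * (f A - f p) = 0 := by
    calc ∫ p in P, exp ⟪V, p⟫ * (f A - f p) = -∫ p in P, f (exp ⟪V, p⟫ • (p - A)) := by
          rw [← integral_neg]
          congr with p
          simp only [map_smul, map_sub, smul_eq_mul]
          ring
      _ = 0 := by
          rw [f.integral_comp_comm ((by fun_prop : Continuous fun p => exp ⟪V, p⟫ • (p - A))
            |>.continuousOn.integrableOn_compact hP),
            setIntegral_exp_inner_smul_sub_weightedBary hP ⟨q, hq⟩, map_zero, neg_zero]
  exact hpos.ne' hzero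

theorem tendsto_log_weightedVol_sub_inner_cocompact (hP : IsCompact P)
    {x : EuclideanSpace ℝ (Fin n)} (hx : x ∈ interior P) :
    Tendsto (fun V => log (weightedVol P V) - ⟪V, x⟫) (cocompact _) atTop := by
  obtain ⟨r, hr, hxr⟩ := Metric.mem_nhds_iff.1 (mem_interior_iff_mem_nhds.1 hx)
  set κ := volume.real (ball (0 : EuclideanSpace ℝ (Fin n)) (r / 4))
  have hκ : 0 < κ :=
    ENNReal.toReal_pos (measure_ball_pos _ _ (by positivity)).ne' measure_ball_lt_top.ne
  refine tendsto_atTop_mono (fun V => ?_) <| tendsto_atTop_add_const_left _ (log κ) <|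
    tendsto_norm_cocompact_atTop.const_mul_atTop (by positivity : 0 < r / 4)
  have hlow : κ * exp (⟪V, x⟫ + r / 4 * ‖V‖) ≤ weightedVol P V :=
    measureReal_ball_mul_exp_le_setIntegral_exp_inner hP hr hxr V
  rw [← log_le_log_iff (by positivity) (weightedVol_pos hP ⟨x, hx⟩ V),
    log_mul hκ.ne' (exp_pos _).ne', log_exp] at hlow
  linarith

theorem exists_weightedBary_eq (hP : IsCompact P) {x : EuclideanSpace ℝ (Fin n)}
    (hx : x ∈ interior P) : ∃ V, weightedBary P V = x := by
  have hF : ∀ V, HasFDerivAt (fun V => log (weightedVol P V) - ⟪V, x⟫)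
      (innerSL ℝ (weightedBary P V - x)) V := fun V => by
    rw [map_sub]
    exact (hasFDerivAt_log_weightedVol hP ⟨x, hx⟩ V).sub (hasFDerivAt_inner_const_right x V)
  obtain ⟨V, hV⟩ := (continuous_iff_continuousAt.2 fun V => (hF V).continuousAt)
    |>.exists_forall_le (tendsto_log_weightedVol_sub_inner_cocompact hP hx)
  have hzero := ((isMinOn_univ_iff.2 hV).isLocalMin univ_mem).hasFDerivAt_eq_zero (hF V)
  refine ⟨V, sub_eq_zero.1 (norm_eq_zero.1 ?_)⟩
  rw [← innerSL_apply_norm ℝ, hzero, norm_zero]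

theorem range_weightedBary (hP : IsCompact P) (hPconv : Convex ℝ P)
    (hPint : (interior P).Nonempty) : range (weightedBary P) = interior P :=
  (range_subset_iff.2 (weightedBary_mem_interior hP hPconv hPint)).antisymm
    fun _ hx => exists_weightedBary_eq hP hx

end WeightedBarycenter

/-- `A_P(V)` lies in the interior of `P` for every `V`, and the closure of
the image `{A_P(V) : V ∈ ℝⁿ}` equals `P`. -/
theorem stmt2 {n : ℕ} (P : Set (EuclideanSpace ℝ (Fin n)))
    (hPcpt : IsCompact P) (hPconv : Convex ℝ P)
    (hPint : (interior P).Nonempty) :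
    (∀ V, weightedBary P V ∈ interior P) ∧
      closure (Set.range fun V => weightedBary P V) = P := by
  refine ⟨weightedBary_mem_interior hPcpt hPconv hPint, ?_⟩
  rw [range_weightedBary hPcpt hPconv hPint,
    hPconv.closure_interior_eq_closure_of_nonempty_interior hPint, hPcpt.isClosed.closure_eq]
end

section
/- Let w : ℝⁿ → ℝ be a differentiable strictly convex function such that 0 lies in the interior of the closure of the gradient image ∇w(ℝⁿ). Then w is bounded from below and attains its minimal value at a unique point. -/
/-!
Since the gradients of `w` come arbitrarily close to every vector of a ball around `0`, compactness
of the unit sphere yields finitely many points `yᵢ` such that every `x ≠ 0` has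
`⟪∇w yᵢ, x⟫ > c ‖x‖` for some `i`. The supporting hyperplanes of `w` at these points then give
`w x ≥ c ‖x‖ - C`, so `w` is coercive and, being continuous, attains its minimum; strict convexity
makes the minimiser unique.
-/

open scoped RealInnerProductSpace
open Filter Metric Set

theorem ConvexOn.add_apply_sub_le_of_hasFDerivAt {E : Type*} [NormedAddCommGroup E]
    [NormedSpace ℝ E] {s : Set E} {f : E → ℝ} {f' : E →L[ℝ] ℝ} {x y : E}
    (hf : ConvexOn ℝ s f) (hx : x ∈ s) (hy : y ∈ s) (hf' : HasFDerivAt f f' x) :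
    f x + f' (y - x) ≤ f y := by
  set L : ℝ →ᵃ[ℝ] E := AffineMap.lineMap x y
  have hline : ConvexOn ℝ (L ⁻¹' s) (f ∘ L) := hf.comp_affineMap L
  have hderiv : HasDerivAt (f ∘ L) (f' (y - x)) 0 := by
    have hf'0 : HasFDerivAt f f' (L 0) := by simpa [L] using hf'
    exact hf'0.comp_hasDerivAt 0 AffineMap.hasDerivAt_lineMap
  have hslope := hline.le_slope_of_hasDerivAt (by simpa [L] using hx) (by simpa [L] using hy)
    one_pos hderiv
  simp only [slope_def_field, Function.comp_apply, L, AffineMap.lineMap_apply_zero,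
    AffineMap.lineMap_apply_one, sub_zero, div_one] at hslope
  linarith

section InnerProductSpace

variable {E : Type*} [NormedAddCommGroup E] [InnerProductSpace ℝ E]

theorem ConvexOn.add_inner_gradient_le [CompleteSpace E] {s : Set E} {f : E → ℝ} {x y : E}
    (hf : ConvexOn ℝ s f) (hx : x ∈ s) (hy : y ∈ s) (hfx : DifferentiableAt ℝ f x) :
    f x + ⟪gradient f x, y - x⟫ ≤ f y := by
  simpa using hf.add_apply_sub_le_of_hasFDerivAt hx hy hfx.hasGradientAt.hasFDerivAt

theorem exists_lt_inner_of_ball_subset_closure_range {ι : Type*} {v : ι → E} {ε : ℝ}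
    (hε : 0 < ε) (hv : ball 0 ε ⊆ closure (range v)) {u : E} (hu : ‖u‖ = 1) :
    ∃ i, ε / 2 < ⟪v i, u⟫ := by
  have hmem : (3 * ε / 4) • u ∈ closure (range v) := by
    refine hv (mem_ball_zero_iff.2 ?_)
    rw [norm_smul, hu, Real.norm_of_nonneg (by positivity)]
    linarith
  obtain ⟨_, ⟨i, rfl⟩, hi⟩ := Metric.mem_closure_iff.1 hmem (ε / 4) (by positivity)
  refine ⟨i, ?_⟩
  have hclose : ⟪(3 * ε / 4) • u - v i, u⟫ < ε / 4 :=
    (real_inner_le_norm _ _).trans_lt (by rwa [hu, mul_one, ← dist_eq_norm])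
  rw [inner_sub_left, real_inner_smul_left, real_inner_self_eq_norm_sq, hu] at hclose
  linarith

theorem exists_finset_mul_norm_lt_inner_of_zero_mem_interior_closure_range [ProperSpace E]
    {ι : Type*} {v : ι → E} (hv : (0 : E) ∈ interior (closure (range v))) :
    ∃ c > 0, ∃ t : Finset ι, ∀ x ≠ 0, ∃ i ∈ t, c * ‖x‖ < ⟪v i, x⟫ := by
  obtain ⟨ε, hε, hball⟩ := Metric.mem_nhds_iff.1 (mem_interior_iff_mem_nhds.1 hv)
  have hcover : sphere (0 : E) 1 ⊆ ⋃ i, {u | ε / 2 < ⟪v i, u⟫} := fun u hu =>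
    mem_iUnion.2 (exists_lt_inner_of_ball_subset_closure_range hε hball
      (mem_sphere_zero_iff_norm.1 hu))
  obtain ⟨t, ht⟩ := (isCompact_sphere (0 : E) 1).elim_finite_subcover
    (fun i => {u | ε / 2 < ⟪v i, u⟫}) (fun i => isOpen_lt continuous_const (by fun_prop)) hcover
  refine ⟨ε / 2, by positivity, t, fun x hx => ?_⟩
  have hxpos : 0 < ‖x‖ := norm_pos_iff.2 hx
  have hunit : ‖x‖⁻¹ • x ∈ sphere (0 : E) 1 := by
    rw [mem_sphere_zero_iff_norm, norm_smul, norm_inv, norm_norm, inv_mul_cancel₀ hxpos.ne']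
  obtain ⟨i, hit, hi⟩ := mem_iUnion₂.1 (ht hunit)
  refine ⟨i, hit, ?_⟩
  rw [mem_ofPred_eq, real_inner_smul_right, lt_inv_mul_iff₀ hxpos] at hi
  linarith

theorem ConvexOn.tendsto_cocompact_atTop_of_zero_mem_interior_closure_range_gradient
    [ProperSpace E] {f : E → ℝ} (hf : ConvexOn ℝ univ f) (hdiff : Differentiable ℝ f)
    (hzero : (0 : E) ∈ interior (closure (range (gradient f)))) :
    Tendsto f (cocompact E) atTop := by
  obtain ⟨c, hc, t, ht⟩ :=
    exists_finset_mul_norm_lt_inner_of_zero_mem_interior_closure_range hzero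
  obtain ⟨C, hC⟩ := (t.image fun y => ⟪gradient f y, y⟫ - f y).exists_le
  have hlower : ∀ x ≠ 0, c * ‖x‖ - C ≤ f x := by
    intro x hx
    obtain ⟨y, hyt, hy⟩ := ht x hx
    have hsupp := hf.add_inner_gradient_le (mem_univ y) (mem_univ x) (hdiff y)
    have hCy := hC _ (Finset.mem_image_of_mem _ hyt)
    rw [inner_sub_right] at hsupp
    linarith
  refine tendsto_atTop_mono' _ ?_
    (tendsto_atTop_add_const_right _ (-C) (tendsto_norm_cocompact_atTop.const_mul_atTop hc))
  filter_upwards [tendsto_norm_cocompact_atTop.eventually_gt_atTop 0] with x hx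
  exact hlower x (norm_pos_iff.1 hx)

end InnerProductSpace

/-- If `w` is differentiable, strictly convex, and `0` lies in the interior of
the closure of the gradient image of `w`, then `w` is bounded below and
attains its minimum at a unique point. -/
theorem stmt7 {n : ℕ} (w : EuclideanSpace ℝ (Fin n) → ℝ)
    (hdiff : Differentiable ℝ w)
    (hconv : StrictConvexOn ℝ Set.univ w)
    (hzero : (0 : EuclideanSpace ℝ (Fin n)) ∈
      interior (closure (Set.range (gradient w)))) :
    BddBelow (Set.range w) ∧ ∃! x, ∀ y, w x ≤ w y := by
  obtain ⟨x₀, hx₀⟩ := hdiff.continuous.exists_forall_le <|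
    hconv.convexOn.tendsto_cocompact_atTop_of_zero_mem_interior_closure_range_gradient hdiff hzero
  refine ⟨⟨w x₀, forall_mem_range.2 hx₀⟩, x₀, hx₀, fun y hy => ?_⟩
  exact hconv.eq_of_isMinOn (isMinOn_univ_iff.2 hy) (isMinOn_univ_iff.2 hx₀) trivial trivial
end

section
/- Let P ⊆ ℝⁿ be a polytope with nonempty interior, let S be its (finite, nonempty) set of extreme points, let N be the cardinality of S, and define h : ℝⁿ → ℝ by h(x) = log((1/N) Σ_{y ∈ S} e^{⟨y,x⟩}). Then h is smooth and strictly convex, h(0) = 0, and the closure of the gradient image ∇h(ℝⁿ) equals P. -/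
open scoped RealInnerProductSpace
open MeasureTheory

private lemma sq_sum_lt_aux12 {ι : Type*} (s : Finset ι) (a q : ι → ℝ)
    (hq : ∀ i ∈ s, 0 < q i)
    (hne : ∃ i ∈ s, ∃ j ∈ s, a i ≠ a j) :
    (∑ i ∈ s, a i * q i) ^ 2 < (∑ i ∈ s, a i ^ 2 * q i) * ∑ i ∈ s, q i := by
  obtain ⟨i₀, hi₀, j₀, hj₀, hij⟩ := hne
  have hQ : 0 < ∑ i ∈ s, q i := Finset.sum_pos hq ⟨i₀, hi₀⟩
  set Q := ∑ i ∈ s, q i with hQdef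
  set A := ∑ i ∈ s, a i * q i with hAdef
  set μ := A / Q with hμ
  have key : ∑ i ∈ s, q i * (a i - μ) ^ 2 = (∑ i ∈ s, a i ^ 2 * q i) - A ^ 2 / Q := by
    have h1 : ∀ i ∈ s, q i * (a i - μ) ^ 2
        = a i ^ 2 * q i - (2 * μ) * (a i * q i) + μ ^ 2 * q i := by
      intro i _; ring
    rw [Finset.sum_congr rfl h1, Finset.sum_add_distrib, Finset.sum_sub_distrib,
      ← Finset.mul_sum, ← Finset.mul_sum, ← hAdef, ← hQdef, hμ]
    field_simp
    ring
  have hpos : 0 < ∑ i ∈ s, q i * (a i - μ) ^ 2 := by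
    have hex : ∃ i ∈ s, a i ≠ μ := by
      by_contra hcon
      push_neg at hcon
      exact hij ((hcon i₀ hi₀).trans (hcon j₀ hj₀).symm)
    obtain ⟨i, hi, hiμ⟩ := hex
    refine Finset.sum_pos' (fun j hj => mul_nonneg (hq j hj).le (sq_nonneg _)) ⟨i, hi, ?_⟩
    have hne0 : a i - μ ≠ 0 := sub_ne_zero.2 hiμ
    have : 0 < (a i - μ) ^ 2 := by positivity
    exact mul_pos (hq i hi) this
  rw [key] at hpos
  have hlt : A ^ 2 / Q < ∑ i ∈ s, a i ^ 2 * q i := by linarith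
  calc A ^ 2 = A ^ 2 / Q * Q := by field_simp
  _ < (∑ i ∈ s, a i ^ 2 * q i) * Q := mul_lt_mul_of_pos_right hlt hQ

private lemma interior_hyperplane_empty12 {E : Type*} [NormedAddCommGroup E]
    [InnerProductSpace ℝ E] {v : E} (hv : v ≠ 0) (c : ℝ) :
    interior {x : E | ⟪x, v⟫ = c} = ∅ := by
  rw [Set.eq_empty_iff_forall_notMem]
  intro x hx
  obtain ⟨ε, hε, hball⟩ := Metric.mem_nhds_iff.1 (mem_interior_iff_mem_nhds.1 hx)
  have hvpos : 0 < ‖v‖ := norm_pos_iff.2 hv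
  set δ := ε / (2 * ‖v‖) with hδ
  have hδpos : 0 < δ := by positivity
  have hmem : x + δ • v ∈ Metric.ball x ε := by
    rw [Metric.mem_ball, dist_eq_norm]
    simp only [add_sub_cancel_left, norm_smul, Real.norm_eq_abs, abs_of_pos hδpos]
    rw [hδ, div_mul_eq_mul_div]
    rw [div_lt_iff₀ (by positivity)]
    nlinarith
  have h1 : ⟪x + δ • v, v⟫ = c := hball hmem
  have hxc : ⟪x, v⟫ = c := by have := interior_subset hx; simpa using this
  have h2 : ⟪x + δ • v, v⟫ = c + δ * ‖v‖ ^ 2 := by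
    rw [inner_add_left, real_inner_smul_left, real_inner_self_eq_norm_sq, hxc]
  rw [h1] at h2
  have : δ * ‖v‖ ^ 2 > 0 := by positivity
  linarith

set_option maxHeartbeats 1000000 in
/-- The log-sum-exp reference function of a polytope: it is smooth, strictly
convex, vanishes at `0`, and its gradient image has closure equal to the
polytope. -/
theorem stmt12 {n : ℕ} (P : Set (EuclideanSpace ℝ (Fin n)))
    (T : Finset (EuclideanSpace ℝ (Fin n))) (hP : P = convexHull ℝ ↑T)
    (hPint : (interior P).Nonempty)
    (S : Finset (EuclideanSpace ℝ (Fin n)))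
    (hS : (S : Set (EuclideanSpace ℝ (Fin n))) = Set.extremePoints ℝ P)
    (h : EuclideanSpace ℝ (Fin n) → ℝ)
    (hh : ∀ x, h x = Real.log ((S.card : ℝ)⁻¹ * ∑ y ∈ S, Real.exp ⟪y, x⟫)) :
    ContDiff ℝ (⊤ : ℕ∞) h ∧ StrictConvexOn ℝ Set.univ h ∧ h 0 = 0 ∧
      closure (Set.range (gradient h)) = P := by
  classical
  have hPconv : Convex ℝ P := hP ▸ convex_convexHull ℝ _
  have hPcomp : IsCompact P := hP ▸ T.finite_toSet.isCompact_convexHull (𝕜 := ℝ)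
  have hPcl : IsClosed P := hPcomp.isClosed
  have hPne : P.Nonempty := hPint.mono interior_subset
  have hPS : P = convexHull ℝ (↑S : Set (EuclideanSpace ℝ (Fin n))) := by
    have hKM := closure_convexHull_extremePoints hPcomp hPconv
    rw [← hS] at hKM
    rw [← hKM, (S.finite_toSet.isCompact_convexHull (𝕜 := ℝ)).isClosed.closure_eq]
  have hSne : S.Nonempty := by
    rw [Finset.nonempty_iff_ne_empty]
    rintro rfl
    simp only [Finset.coe_empty, convexHull_empty] at hPS
    rw [hPS] at hPne
    exact hPne.ne_empty rfl
  have hNpos : (0:ℝ) < (S.card : ℝ) := by exact_mod_cast Finset.card_pos.2 hSne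
  set c : ℝ := (S.card : ℝ)⁻¹ with hc
  have hcpos : 0 < c := inv_pos.2 hNpos
  set f : EuclideanSpace ℝ (Fin n) → ℝ := fun x => ∑ y ∈ S, Real.exp ⟪y, x⟫ with hfdef
  have hfpos : ∀ x, 0 < f x := fun x => Finset.sum_pos (fun y _ => Real.exp_pos _) hSne
  have hhf : ∀ x, h x = Real.log (c * f x) := hh
  set g : EuclideanSpace ℝ (Fin n) → EuclideanSpace ℝ (Fin n) :=
    fun x => (f x)⁻¹ • ∑ y ∈ S, Real.exp ⟪y, x⟫ • y with hgdef
  -- derivative of f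
  have hfderiv : ∀ x, HasFDerivAt f
      (∑ y ∈ S, Real.exp ⟪y, x⟫ • (innerSL ℝ y : EuclideanSpace ℝ (Fin n) →L[ℝ] ℝ)) x := by
    intro x
    refine HasFDerivAt.fun_sum fun y _ => ?_
    have h1 : HasFDerivAt (fun z : EuclideanSpace ℝ (Fin n) => (⟪y, z⟫ : ℝ)) (innerSL ℝ y) x :=
      (innerSL ℝ y).hasFDerivAt
    have := (Real.hasDerivAt_exp (⟪y, x⟫ : ℝ)).comp_hasFDerivAt x h1
    exact this
  have hgrad : ∀ x, HasGradientAt h (g x) x := by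
    intro x
    rw [hasGradientAt_iff_hasFDerivAt]
    have hcf : HasFDerivAt (fun x => c * f x)
        (c • ∑ y ∈ S, Real.exp ⟪y, x⟫ • (innerSL ℝ y : EuclideanSpace ℝ (Fin n) →L[ℝ] ℝ)) x :=
      (hfderiv x).const_mul c
    have hne : c * f x ≠ 0 := (mul_pos hcpos (hfpos x)).ne'
    have hlog := (Real.hasDerivAt_log hne).comp_hasFDerivAt x hcf
    have heq : h = fun x => Real.log (c * f x) := funext hhf
    rw [heq]
    convert hlog using 1
    · rfl
    · rfl
    ext v
    simp only [InnerProductSpace.toDual_apply_apply, ContinuousLinearMap.smul_apply,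
      ContinuousLinearMap.coe_sum', Finset.sum_apply, innerSL_apply_apply, hgdef,
      smul_eq_mul]
    rw [real_inner_smul_left, sum_inner]
    simp only [real_inner_smul_left]
    field_simp [(hfpos x).ne']
  have hgmem : ∀ x, g x ∈ P := by
    intro x
    rw [hPS]
    have hmem := S.centerMass_mem_convexHull (w := fun y => Real.exp ⟪y, x⟫)
      (fun y _ => (Real.exp_pos _).le) (by simpa [hfdef] using hfpos x)
      (z := id) (fun y hy => Finset.mem_coe.2 hy)
    simpa [Finset.centerMass, hgdef, hfdef] using hmem
  have hsmooth : ContDiff ℝ (⊤ : ℕ∞) h := by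
    rw [funext hhf]
    refine ContDiff.log ?_ fun x => (mul_pos hcpos (hfpos x)).ne'
    exact contDiff_const.mul (ContDiff.sum fun y _ =>
      Real.contDiff_exp.comp (innerSL ℝ y).contDiff)
  have h0 : h 0 = 0 := by
    rw [hh]
    simp only [inner_zero_right, Real.exp_zero]
    rw [Finset.sum_const, nsmul_eq_mul, mul_one, inv_mul_cancel₀ hNpos.ne']
    exact Real.log_one
  have hsep : ∀ v : EuclideanSpace ℝ (Fin n), v ≠ 0 →
      ∃ y ∈ S, ∃ z ∈ S, (⟪y, v⟫ : ℝ) ≠ ⟪z, v⟫ := by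
    intro v hv
    by_contra hcon
    push_neg at hcon
    obtain ⟨y₀, hy₀⟩ := hSne
    have hlin : IsLinearMap ℝ (fun w : EuclideanSpace ℝ (Fin n) => (⟪w, v⟫ : ℝ)) :=
      ⟨fun a b => inner_add_left a b v, fun r a => real_inner_smul_left a v r⟩
    have hsub : P ⊆ {x : EuclideanSpace ℝ (Fin n) | (⟪x, v⟫:ℝ) = ⟪y₀, v⟫} := by
      rw [hPS]
      refine convexHull_min ?_ (convex_hyperplane hlin _)
      intro y hy
      exact hcon y (Finset.mem_coe.1 hy) y₀ hy₀
    obtain ⟨w, hw⟩ := hPint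
    have := interior_mono hsub hw
    rw [interior_hyperplane_empty12 hv] at this
    exact this
  have hstrict : StrictConvexOn ℝ Set.univ h := by
    refine ⟨convex_univ, ?_⟩
    intro x hxu z hzu hxz a b ha hb hab
    set v := z - x with hvdef
    have hv : v ≠ 0 := sub_ne_zero.2 (Ne.symm hxz)
    set p : EuclideanSpace ℝ (Fin n) → ℝ → ℝ :=
      fun y t => Real.exp (⟪y, x⟫ + t * ⟪y, v⟫) with hpdef
    have hppos : ∀ y t, 0 < p y t := fun y t => Real.exp_pos _
    set ψ := fun t => ∑ y ∈ S, p y t with hψ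
    set ψ₁ := fun t => ∑ y ∈ S, (⟪y, v⟫:ℝ) * p y t with hψ₁
    set ψ₂ := fun t => ∑ y ∈ S, (⟪y, v⟫:ℝ)^2 * p y t with hψ₂
    have hψpos : ∀ t, 0 < ψ t := fun t => Finset.sum_pos (fun y _ => hppos y t) hSne
    set φ := fun t : ℝ => h (x + t • v) with hφ
    have hφeq : ∀ t, φ t = Real.log (c * ψ t) := by
      intro t
      rw [hφ]; dsimp only; rw [hh]
      congr 2
      · refine Finset.sum_congr rfl fun y _ => ?_
        rw [inner_add_right, real_inner_smul_right]
    have hpd : ∀ y t, HasDerivAt (fun t => p y t) ((⟪y, v⟫:ℝ) * p y t) t := by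
      intro y t
      have h1 : HasDerivAt (fun t : ℝ => (⟪y, x⟫:ℝ) + t * ⟪y, v⟫) (⟪y, v⟫:ℝ) t := by
        simpa using ((hasDerivAt_id t).mul_const (⟪y, v⟫:ℝ)).const_add (⟪y, x⟫:ℝ)
      simpa [hpdef, mul_comm] using h1.exp
    have hψd : ∀ t, HasDerivAt ψ (ψ₁ t) t :=
      fun t => HasDerivAt.fun_sum fun y _ => hpd y t
    have hψ₁d : ∀ t, HasDerivAt ψ₁ (ψ₂ t) t := by
      intro t
      refine HasDerivAt.fun_sum fun y _ => ?_
      simpa [sq, mul_assoc] using (hpd y t).const_mul (⟪y, v⟫:ℝ)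
    have hφd : ∀ t, HasDerivAt φ (ψ₁ t / ψ t) t := by
      intro t
      have hne : c * ψ t ≠ 0 := (mul_pos hcpos (hψpos t)).ne'
      have hlog := ((hψd t).const_mul c).log hne
      have heqφ : (fun t => Real.log (c * ψ t)) = φ := funext fun t => (hφeq t).symm
      rw [heqφ] at hlog
      convert hlog using 1
      rw [mul_div_mul_left _ _ hcpos.ne']
    have hφ₁d : ∀ t, HasDerivAt (fun t => ψ₁ t / ψ t)
        ((ψ₂ t * ψ t - ψ₁ t * ψ₁ t) / (ψ t)^2) t :=
      fun t => (hψ₁d t).div (hψd t) (hψpos t).ne'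
    have hd1 : deriv φ = fun t => ψ₁ t / ψ t := funext fun t => (hφd t).deriv
    have hd2 : ∀ t, deriv^[2] φ t = (ψ₂ t * ψ t - ψ₁ t * ψ₁ t) / (ψ t)^2 := by
      intro t
      show deriv (deriv φ) t = _
      rw [hd1]
      exact (hφ₁d t).deriv
    have hkey : ∀ t, 0 < deriv^[2] φ t := by
      intro t
      rw [hd2]
      apply div_pos _ (pow_pos (hψpos t) 2)
      have hcs := sq_sum_lt_aux12 S (fun y => (⟪y, v⟫:ℝ)) (fun y => p y t)
        (fun y _ => hppos y t) (hsep v hv)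
      have hcs' : (ψ₁ t) ^ 2 < ψ₂ t * ψ t := by
        simpa [hψ, hψ₁, hψ₂] using hcs
      nlinarith [hcs']
    have hφconv : StrictConvexOn ℝ Set.univ φ :=
      strictConvexOn_univ_of_deriv2_pos
        (continuous_iff_continuousAt.2 fun t => (hφd t).continuousAt) hkey
    have h01 : (0:ℝ) ≠ 1 := by norm_num
    have hlt := hφconv.2 (Set.mem_univ (0:ℝ)) (Set.mem_univ (1:ℝ)) h01 ha hb hab
    simp only [smul_eq_mul, mul_zero, mul_one, zero_add] at hlt
    have e0 : φ 0 = h x := by rw [hφ]; simp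
    have e1 : φ 1 = h z := by rw [hφ]; simp [hvdef]
    have hax : a = 1 - b := by linarith
    have hpt : x + b • v = a • x + b • z := by
      rw [hvdef, hax]; module
    have eb : φ b = h (a • x + b • z) := by
      rw [hφ]; exact congrArg h hpt
    rw [e0, e1, eb] at hlt
    simpa using hlt
  have hgradeq : gradient h = g := funext fun x => (hgrad x).gradient
  have hransub : closure (Set.range (gradient h)) ⊆ P := by
    refine closure_minimal ?_ hPcl
    rintro - ⟨x, rfl⟩
    rw [hgradeq]
    exact hgmem x
  have hint : interior P ⊆ Set.range (gradient h) := by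
    intro point hpmem
    obtain ⟨ε, hε, hball⟩ := Metric.mem_nhds_iff.1 (mem_interior_iff_mem_nhds.1 hpmem)
    have hsup : ∀ (x : EuclideanSpace ℝ (Fin n)) (q), q ∈ P →
        (⟪q, x⟫:ℝ) ≤ S.sup' hSne (fun y => (⟪y, x⟫:ℝ)) := by
      intro x q hq
      rw [hPS] at hq
      have hlin : IsLinearMap ℝ (fun w : EuclideanSpace ℝ (Fin n) => (⟪w, x⟫ : ℝ)) :=
        ⟨fun a b => inner_add_left a b x, fun r a => real_inner_smul_left a x r⟩
      have hconv : Convex ℝ {w : EuclideanSpace ℝ (Fin n) |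
          (⟪w, x⟫:ℝ) ≤ S.sup' hSne fun y => (⟪y, x⟫:ℝ)} :=
        convex_halfSpace_le hlin _
      have hsub2 : (↑S : Set (EuclideanSpace ℝ (Fin n))) ⊆ {w : EuclideanSpace ℝ (Fin n) |
          (⟪w, x⟫:ℝ) ≤ S.sup' hSne fun y => (⟪y, x⟫:ℝ)} :=
        fun y hy => Finset.le_sup' (fun y => (⟪y, x⟫:ℝ)) (Finset.mem_coe.1 hy)
      exact convexHull_min hsub2 hconv hq
    have hkey : ∀ x : EuclideanSpace ℝ (Fin n),
        (⟪point, x⟫:ℝ) + ε / 2 * ‖x‖ ≤ S.sup' hSne fun y => (⟪y, x⟫:ℝ) := by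
      intro x
      by_cases hx0 : x = 0
      · subst hx0
        simp only [inner_zero_right, norm_zero, mul_zero, add_zero]
        obtain ⟨y₀, hy₀⟩ := hSne
        have := Finset.le_sup' (fun y => (⟪y, (0:EuclideanSpace ℝ (Fin n))⟫:ℝ)) hy₀
        simpa using this
      · have hxn : 0 < ‖x‖ := norm_pos_iff.2 hx0
        set q := point + (ε / 2 * ‖x‖⁻¹) • x with hq
        have hqball : q ∈ Metric.ball point ε := by
          rw [Metric.mem_ball, dist_eq_norm, hq]
          simp only [add_sub_cancel_left, norm_smul, Real.norm_eq_abs]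
          rw [abs_of_pos (by positivity), mul_assoc, inv_mul_cancel₀ hxn.ne', mul_one]
          linarith
        have hqP : q ∈ P := hball hqball
        have hle := hsup x q hqP
        rw [hq, inner_add_left, real_inner_smul_left, real_inner_self_eq_norm_sq] at hle
        have hxx : ε / 2 * ‖x‖⁻¹ * ‖x‖ ^ 2 = ε / 2 * ‖x‖ := by
          field_simp
        rw [hxx] at hle
        exact hle
    have hlow : ∀ x : EuclideanSpace ℝ (Fin n),
        (S.sup' hSne fun y => (⟪y, x⟫:ℝ)) - Real.log S.card ≤ h x := by
      intro x
      obtain ⟨y₀, hy₀, hsup'⟩ := Finset.exists_mem_eq_sup' hSne (fun y => (⟪y, x⟫:ℝ))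
      have h1 : Real.exp (S.sup' hSne fun y => (⟪y, x⟫:ℝ)) ≤ f x := by
        rw [hsup']
        exact Finset.single_le_sum (f := fun y => Real.exp (⟪y, x⟫:ℝ))
          (fun y _ => (Real.exp_pos _).le) hy₀
      have h2 : c * Real.exp (S.sup' hSne fun y => (⟪y, x⟫:ℝ)) ≤ c * f x :=
        mul_le_mul_of_nonneg_left h1 hcpos.le
      have h3 := Real.log_le_log (mul_pos hcpos (Real.exp_pos _)) h2
      rw [Real.log_mul hcpos.ne' (Real.exp_pos _).ne', Real.log_exp, hc, Real.log_inv] at h3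
      rw [hhf x]
      linarith
    set F := fun x : EuclideanSpace ℝ (Fin n) => h x - (⟪point, x⟫:ℝ) with hF
    have hlb : ∀ x : EuclideanSpace ℝ (Fin n), ε / 2 * ‖x‖ - Real.log S.card ≤ F x := by
      intro x
      have h1 := hkey x
      have h2 := hlow x
      rw [hF]; dsimp only
      linarith
    obtain ⟨R, hR⟩ : ∃ R : ℝ, R = 2 / ε * (Real.log S.card + 1) := ⟨_, rfl⟩
    have hlogN : 0 ≤ Real.log S.card := Real.log_nonneg (by exact_mod_cast Finset.card_pos.2 hSne)
    have hRpos : 0 < R := by rw [hR]; positivity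
    have hFbig : ∀ x : EuclideanSpace ℝ (Fin n), R ≤ ‖x‖ → 1 ≤ F x := by
      intro x hx
      have h1 := hlb x
      have h2 : ε / 2 * R ≤ ε / 2 * ‖x‖ := mul_le_mul_of_nonneg_left hx (by linarith)
      have h3 : ε / 2 * R = Real.log S.card + 1 := by
        rw [hR]; field_simp
      calc (1:ℝ) = ε / 2 * R - Real.log S.card := by rw [h3]; ring
      _ ≤ ε / 2 * ‖x‖ - Real.log S.card := by linarith
      _ ≤ F x := h1
    have hFcont : Continuous F := by
      rw [hF]
      exact (hsmooth.continuous).sub (continuous_const.inner continuous_id)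
    obtain ⟨x₀, hx₀K, hx₀min⟩ := (isCompact_closedBall (0:EuclideanSpace ℝ (Fin n)) R).exists_isMinOn
      ⟨0, Metric.mem_closedBall_self hRpos.le⟩ hFcont.continuousOn
    have hF0 : F 0 = 0 := by rw [hF]; simp [h0]
    have hFx₀ : F x₀ ≤ 0 := by
      have h4 : F x₀ ≤ F 0 := hx₀min (Metric.mem_closedBall_self hRpos.le)
      rwa [hF0] at h4
    have hx₀lt : ‖x₀‖ < R := by
      by_contra hcon
      push_neg at hcon
      have := hFbig x₀ hcon
      linarith
    have hlocal : IsLocalMin F x₀ :=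
      hx₀min.isLocalMin (Metric.closedBall_mem_nhds_of_mem (by simpa using hx₀lt))
    have hFd : HasFDerivAt F
        ((InnerProductSpace.toDual ℝ (EuclideanSpace ℝ (Fin n)) (g x₀) :
          EuclideanSpace ℝ (Fin n) →L[ℝ] ℝ) - innerSL ℝ point) x₀ :=
      ((hgrad x₀).hasFDerivAt).sub ((innerSL ℝ point).hasFDerivAt)
    have hzero := hlocal.hasFDerivAt_eq_zero hFd
    have hgp : g x₀ = point := by
      have happ := congrFun (congrArg (fun (L : EuclideanSpace ℝ (Fin n) →L[ℝ] ℝ) =>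
        (L : EuclideanSpace ℝ (Fin n) → ℝ)) hzero) (g x₀ - point)
      simp only [ContinuousLinearMap.sub_apply, InnerProductSpace.toDual_apply_apply,
        innerSL_apply_apply, ContinuousLinearMap.zero_apply, ContinuousLinearMap.coe_sub',
        Pi.sub_apply, ContinuousLinearMap.coe_zero, Pi.zero_apply] at happ
      have hz : (⟪g x₀ - point, g x₀ - point⟫:ℝ) = 0 := by
        rw [inner_sub_left]
        linarith
      have := inner_self_eq_zero.1 hz
      exact sub_eq_zero.1 this
    exact ⟨x₀, by rw [hgradeq, hgp]⟩
  have hPsub : P ⊆ closure (Set.range (gradient h)) := by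
    intro q hq
    obtain ⟨p₀, hp₀⟩ := hPint
    have hctd : Continuous (fun t : ℝ => q + t • (p₀ - q)) :=
      continuous_const.add (continuous_id.smul continuous_const)
    have htend : Filter.Tendsto (fun t : ℝ => q + t • (p₀ - q))
        (nhdsWithin 0 (Set.Ioi 0)) (nhds q) := by
      have := hctd.tendsto 0
      simp only [zero_smul, add_zero] at this
      exact this.mono_left nhdsWithin_le_nhds
    refine mem_closure_of_tendsto htend ?_
    filter_upwards [Ioc_mem_nhdsGT_of_mem (Set.left_mem_Ico.2 one_pos)] with t ht
    apply hint
    have heq : q + t • (p₀ - q) = (1 - t) • q + t • p₀ := by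
      rw [smul_sub, sub_smul, one_smul]; abel
    rw [heq]
    exact hPconv.combo_closure_interior_mem_interior (subset_closure hq) hp₀
      (by linarith [ht.2]) ht.1 (by ring)
  exact ⟨hsmooth, hstrict, h0, subset_antisymm hransub hPsub⟩
end

section
/- Let f, g : ℝⁿ → ℝ be smooth strictly convex functions such that the closures of the gradient images ∇f(ℝⁿ) and ∇g(ℝⁿ) are compact sets P and Q respectively. Then the closure of ∇(f+g)(ℝⁿ) equals the Minkowski sum P + Q = {p + q : p ∈ P, q ∈ Q}. -/
open scoped RealInnerProductSpace Pointwise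
open MeasureTheory

section Aux

variable {F : Type*} [NormedAddCommGroup F] [InnerProductSpace ℝ F] [CompleteSpace F]

/-- Derivative of `t ↦ h (x + t • d)` at `0`, given a gradient of `h` at `x`. -/
lemma hasDerivAt_line_aux {h : F → ℝ} {x v : F} (hd : HasGradientAt h v x) (d : F) :
    HasDerivAt (fun t : ℝ => h (x + t • d)) ⟪v, d⟫ 0 := by
  have hline : HasDerivAt (fun t : ℝ => x + t • d) d 0 := by
    simpa using ((hasDerivAt_id (0:ℝ)).smul_const d).const_add x
  have hF := hd.hasFDerivAt
  have hF' : HasFDerivAt h (InnerProductSpace.toDual ℝ F v) (x + (0:ℝ) • d) := by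
    simpa using hF
  have := hF'.comp_hasDerivAt 0 hline
  simpa [InnerProductSpace.toDual_apply_apply, Function.comp_def] using this

/-- Subgradient inequality for convex differentiable functions. -/
lemma subgrad_ineq {h : F → ℝ} (hc : ConvexOn ℝ Set.univ h) {x v : F}
    (hd : HasGradientAt h v x) (y : F) : h x + ⟪v, y - x⟫ ≤ h y := by
  set φ : ℝ → ℝ := fun t => h (x + t • (y - x)) with hφ
  have hφc : ConvexOn ℝ Set.univ φ := by
    have := hc.comp_affineMap (AffineMap.lineMap x y : ℝ →ᵃ[ℝ] F)
    have heq : (h ∘ (AffineMap.lineMap x y : ℝ →ᵃ[ℝ] F)) = φ := by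
      funext t
      simp only [Function.comp_apply, AffineMap.lineMap_apply_module, φ]
      congr 1
      module
    simpa [heq] using this
  have hder : HasDerivAt φ ⟪v, y - x⟫ 0 := hasDerivAt_line_aux hd (y - x)
  have := hφc.le_slope_of_hasDerivAt (Set.mem_univ 0) (Set.mem_univ 1) one_pos hder
  have hs : slope φ 0 1 = h y - h x := by
    simp [slope_def_field, φ]
  rw [hs] at this
  linarith

/-- If a function has a derivative at `0` and is locally ≥ its value at `0` on the right,
the derivative is nonnegative. -/
lemma deriv_nonneg_of_right {φ : ℝ → ℝ} {c : ℝ} (hd : HasDerivAt φ c 0)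
    (h : ∀ᶠ t in nhdsWithin 0 (Set.Ioi 0), φ 0 ≤ φ t) : 0 ≤ c := by
  have hslope : Filter.Tendsto (slope φ 0) (nhdsWithin 0 {(0:ℝ)}ᶜ) (nhds c) :=
    hasDerivAt_iff_tendsto_slope.mp hd
  have hmono : nhdsWithin (0:ℝ) (Set.Ioi 0) ≤ nhdsWithin 0 {(0:ℝ)}ᶜ :=
    nhdsWithin_mono _ (fun t ht => ne_of_gt ht)
  refine ge_of_tendsto (hslope.mono_left hmono) ?_
  filter_upwards [h, self_mem_nhdsWithin] with t ht ht'
  have ht0 : (0:ℝ) < t := ht'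
  have : slope φ 0 t = (φ t - φ 0) / t := by simp [slope_def_field]
  rw [this]
  exact div_nonneg (by linarith) ht0.le

end Aux

section Key

variable {F : Type*} [NormedAddCommGroup F] [InnerProductSpace ℝ F] [CompleteSpace F]
  [ProperSpace F]

/-- A differentiable convex function bounded below has points of arbitrarily small gradient. -/
lemma zero_mem_closure_gradient {h : F → ℝ}
    (hc : ConvexOn ℝ Set.univ h) (hd : Differentiable ℝ h)
    {m : ℝ} (hm : ∀ x, m ≤ h x) :
    (0 : F) ∈ closure (Set.range (gradient h)) := by
  rw [Metric.mem_closure_iff]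
  intro ε hε
  have hm0 : 0 ≤ h 0 - m := by linarith [hm 0]
  set R : ℝ := (h 0 - m) / ε + 1 with hR
  have hRpos : 0 < R := by positivity
  obtain ⟨x₀, hx₀mem, hx₀min⟩ := (isCompact_closedBall (0:F) R).exists_isMinOn
    ⟨0, Metric.mem_closedBall_self hRpos.le⟩ hd.continuous.continuousOn
  set v := gradient h x₀ with hv
  refine ⟨v, ⟨x₀, rfl⟩, ?_⟩
  rw [dist_comm, dist_zero_right]
  have hkey : ‖v‖ * R ≤ h 0 - m := by
    rcases lt_or_eq_of_le (by simpa [Metric.mem_closedBall, dist_zero_right] using hx₀mem :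
        ‖x₀‖ ≤ R) with hin | hbd
    · -- interior minimum: gradient vanishes
      have hloc : IsLocalMin h x₀ := by
        apply hx₀min.isLocalMin
        exact Metric.closedBall_mem_nhds_of_mem (by simpa [Metric.mem_ball, dist_zero_right])
      have hf0 : fderiv ℝ h x₀ = 0 := hloc.fderiv_eq_zero
      have : v = 0 := by rw [hv]; simp [gradient, hf0]
      rw [this]; simpa using hm0
    · -- boundary minimum
      have hRR : ‖x₀‖ = R := hbd
      have hstep1 : ∀ d : F, ⟪d, x₀⟫ < 0 → 0 ≤ ⟪v, d⟫ := by
        intro d hd'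
        apply deriv_nonneg_of_right (hasDerivAt_line_aux (hd x₀).hasGradientAt d)
        have hcont : Continuous fun t : ℝ => 2 * ⟪x₀, d⟫ + t * ‖d‖ ^ 2 := by continuity
        have h0lt : 2 * ⟪x₀, d⟫ + 0 * ‖d‖ ^ 2 < 0 := by
          rw [real_inner_comm] at hd'; linarith
        have hev : ∀ᶠ t in nhds (0:ℝ), 2 * ⟪x₀, d⟫ + t * ‖d‖ ^ 2 < 0 :=
          (hcont.continuousAt (x := 0)).eventually_lt_const h0lt
        filter_upwards [hev.filter_mono nhdsWithin_le_nhds, self_mem_nhdsWithin]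
          with t htneg htpos
        have htpos' : (0:ℝ) < t := htpos
        have hmem : x₀ + t • d ∈ Metric.closedBall (0:F) R := by
          rw [Metric.mem_closedBall, dist_zero_right]
          have hsq : ‖x₀ + t • d‖ ^ 2 = R ^ 2 + t * (2 * ⟪x₀, d⟫ + t * ‖d‖ ^ 2) := by
            rw [norm_add_sq_real, real_inner_smul_right, norm_smul, hRR]
            rw [Real.norm_eq_abs, abs_of_pos htpos']
            ring
          nlinarith [norm_nonneg (x₀ + t • d),
            mul_nonpos_of_nonneg_of_nonpos htpos'.le htneg.le]
        simpa using isMinOn_iff.mp hx₀min _ hmem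
      have hstep2 : ∀ d : F, ⟪d, x₀⟫ ≤ 0 → 0 ≤ ⟪v, d⟫ := by
        intro d hd0
        by_contra hlt
        push_neg at hlt
        have haux : ∀ δ : ℝ, 0 < δ → 0 ≤ ⟪v, d⟫ - δ * ⟪v, x₀⟫ := by
          intro δ hδ
          have := hstep1 (d - δ • x₀) (by
            rw [inner_sub_left, real_inner_smul_left, real_inner_self_eq_norm_sq, hRR]
            nlinarith [mul_pos hδ (pow_pos hRpos 2)])
          rwa [inner_sub_right, real_inner_smul_right] at this
        have hvx0 : ⟪v, x₀⟫ < 0 := by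
          by_contra hge
          push_neg at hge
          have := haux 1 one_pos
          nlinarith
        have hδpos : 0 < ⟪v, d⟫ / (2 * ⟪v, x₀⟫) := div_pos_of_neg_of_neg hlt (by linarith)
        have h2 := haux _ hδpos
        have hne : ⟪v, x₀⟫ ≠ 0 := ne_of_lt hvx0
        have h3 : ⟪v, d⟫ / (2 * ⟪v, x₀⟫) * ⟪v, x₀⟫ = ⟪v, d⟫ / 2 := by
          field_simp
        linarith
      have hvx : ⟪v, x₀⟫ ≤ 0 := by
        have := hstep1 (-x₀) (by
          rw [inner_neg_left, real_inner_self_eq_norm_sq, hRR]; nlinarith)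
        rwa [inner_neg_right, neg_nonneg] at this
      have htan : ‖v‖ ^ 2 * R ^ 2 ≤ ⟪v, x₀⟫ ^ 2 := by
        have := hstep2 ((⟪v, x₀⟫ / R ^ 2) • x₀ - v) (by
          rw [inner_sub_left, real_inner_smul_left, real_inner_self_eq_norm_sq, hRR,
            div_mul_cancel₀ _ (by positivity : (R:ℝ) ^ 2 ≠ 0)]
          simp)
        rw [inner_sub_right, real_inner_smul_right, real_inner_self_eq_norm_sq] at this
        have hthis : ‖v‖ ^ 2 ≤ ⟪v, x₀⟫ / R ^ 2 * ⟪v, x₀⟫ := by linarith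
        calc ‖v‖ ^ 2 * R ^ 2 ≤ (⟪v, x₀⟫ / R ^ 2 * ⟪v, x₀⟫) * R ^ 2 := by nlinarith
          _ = ⟪v, x₀⟫ ^ 2 := by field_simp
      have hnvR : ‖v‖ * R ≤ -⟪v, x₀⟫ := by nlinarith [norm_nonneg v, mul_nonneg (norm_nonneg v) hRpos.le]
      have hsub := subgrad_ineq hc (hd x₀).hasGradientAt 0
      rw [zero_sub, inner_neg_right] at hsub
      have := hm x₀
      linarith
  have hεR : ε * R = (h 0 - m) + ε := by
    rw [hR]
    field_simp
  have hvle : ‖v‖ ≤ (h 0 - m) / R := (le_div_iff₀ hRpos).mpr hkey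
  have : (h 0 - m) / R < ε := by
    rw [div_lt_iff₀ hRpos]
    linarith
  linarith

end Key

/-- The gradient image closure of a sum of smooth strictly convex functions is
the Minkowski sum of the gradient image closures. -/
theorem stmt13 {n : ℕ} (f g : EuclideanSpace ℝ (Fin n) → ℝ)
    (hf : ContDiff ℝ (⊤ : ℕ∞) f) (hg : ContDiff ℝ (⊤ : ℕ∞) g)
    (hfconv : StrictConvexOn ℝ Set.univ f)
    (hgconv : StrictConvexOn ℝ Set.univ g)
    (P Q : Set (EuclideanSpace ℝ (Fin n)))
    (hP : closure (Set.range (gradient f)) = P) (hPcpt : IsCompact P)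
    (hQ : closure (Set.range (gradient g)) = Q) (hQcpt : IsCompact Q) :
    closure (Set.range (gradient fun x => f x + g x)) = P + Q := by

  have hfd : Differentiable ℝ f := hf.differentiable (by simp)
  have hgd : Differentiable ℝ g := hg.differentiable (by simp)
  have hFgrad : ∀ x, HasGradientAt (fun x => f x + g x) (gradient f x + gradient g x) x := by
    intro x
    rw [hasGradientAt_iff_hasFDerivAt, map_add]
    exact ((hfd x).hasGradientAt.hasFDerivAt).add ((hgd x).hasGradientAt.hasFDerivAt)
  have hFg : gradient (fun x => f x + g x) = fun x => gradient f x + gradient g x :=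
    gradient_eq hFgrad
  apply Set.Subset.antisymm
  · -- easy inclusion
    apply closure_minimal
    · rintro _ ⟨x, rfl⟩
      rw [hFg]
      exact Set.add_mem_add (hP ▸ subset_closure ⟨x, rfl⟩) (hQ ▸ subset_closure ⟨x, rfl⟩)
    · exact (hPcpt.add hQcpt).isClosed
  · -- hard inclusion
    have hmain : ∀ a b : EuclideanSpace ℝ (Fin n), gradient f a + gradient g b ∈
        closure (Set.range (gradient fun x => f x + g x)) := by
      intro a b
      set c : EuclideanSpace ℝ (Fin n) := gradient f a + gradient g b with hc
      set L := InnerProductSpace.toDual ℝ (EuclideanSpace ℝ (Fin n)) c with hL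
      set h : EuclideanSpace ℝ (Fin n) → ℝ := fun x => f x + g x - L x with hh
      have hhgrad : ∀ x, HasGradientAt h (gradient f x + gradient g x - c) x := by
        intro x
        rw [hasGradientAt_iff_hasFDerivAt, map_sub, map_add]
        exact (((hfd x).hasGradientAt.hasFDerivAt).add
          ((hgd x).hasGradientAt.hasFDerivAt)).sub L.hasFDerivAt
      have hhconv : ConvexOn ℝ Set.univ h := by
        have h1 : ConvexOn ℝ Set.univ fun x => f x + g x :=
          hfconv.convexOn.add hgconv.convexOn
        have h2 : ConvexOn ℝ Set.univ fun x : EuclideanSpace ℝ (Fin n) => -(L x) :=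
          ⟨convex_univ, fun x _ y _ p q hp hq hpq => by
            simp only [map_add, map_smulₛₗ, RingHom.id_apply, smul_eq_mul]
            exact le_of_eq (by ring)⟩
        have heq : h = (fun x => f x + g x) + fun x : EuclideanSpace ℝ (Fin n) => -(L x) := by
          funext x
          simp [hh, sub_eq_add_neg]
        rw [heq]
        exact h1.add h2
      have hhd : Differentiable ℝ h := (hfd.add hgd).sub L.differentiable
      have hbound : ∀ x, f a + g b - ⟪gradient f a, a⟫ - ⟪gradient g b, b⟫ ≤ h x := by
        intro x
        have h1 := subgrad_ineq hfconv.convexOn (hfd a).hasGradientAt x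
        have h2 := subgrad_ineq hgconv.convexOn (hgd b).hasGradientAt x
        rw [inner_sub_right] at h1 h2
        have hLx : L x = ⟪gradient f a, x⟫ + ⟪gradient g b, x⟫ := by
          rw [hL, InnerProductSpace.toDual_apply_apply, hc, inner_add_left]
        simp only [hh]
        rw [hLx]
        linarith
      have h0 := zero_mem_closure_gradient hhconv hhd hbound
      have hgradh : gradient h = fun x => (gradient f x + gradient g x) - c :=
        gradient_eq hhgrad
      have himgcl := (Homeomorph.addRight c).image_closure (Set.range (gradient h))
      have hc0 : c ∈ (Homeomorph.addRight c) '' closure (Set.range (gradient h)) :=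
        ⟨0, h0, by simp⟩
      rw [himgcl] at hc0
      have himg : (Homeomorph.addRight c) '' Set.range (gradient h)
          = Set.range fun x => gradient f x + gradient g x := by
        rw [hgradh, ← Set.range_comp]
        have hcomp : (⇑(Homeomorph.addRight c) ∘ fun x => gradient f x + gradient g x - c)
            = fun x => gradient f x + gradient g x := by
          funext x
          simp
        rw [hcomp]
      rw [himg] at hc0
      rwa [hFg]
    intro z hz
    rw [Set.mem_add] at hz
    obtain ⟨p, hp, q, hq, rfl⟩ := hz
    rw [← hP] at hp
    rw [← hQ] at hq
    obtain ⟨u, hu, hulim⟩ := mem_closure_iff_seq_limit.mp hp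
    obtain ⟨w, hw, hwlim⟩ := mem_closure_iff_seq_limit.mp hq
    refine isClosed_closure.mem_of_tendsto (hulim.add hwlim)
      (Filter.Eventually.of_forall fun k => ?_)
    obtain ⟨a, ha⟩ := hu k
    obtain ⟨b, hb⟩ := hw k
    rw [← ha, ← hb]
    exact hmain a b
end
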